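/- arXiv:2208.03065 — 8 statements merged into one kernel-verified Lean document; each statement's English description precedes it below -/
import Mathlib

section
/- Let K be a compact metrizable space and let W be a nonempty open subset of W's ambient space K. Then the Stone–Čech compactification βW of W is a sick compactum. -/
open MeasureTheory Topology Filter Set

/-- A compact Hausdorff space `K` is *sick* if there are a separable Banach lattice `E`,
a positive `u : E`, and an injective linear lattice homomorphism `T : C(K, ℝ) → E` with
`T 1 = u` whose range is the principal ideal generated by `u`. -/
def IsSick (K : Type*) [TopologicalSpace K] : Prop :=
  ∃ (E : Type) (_ : NormedAddCommGroup E) (_ : Lattice E) (_ : IsOrderedAddMonoid E)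
    (_ : HasSolidNorm E) (_ : NormedSpace ℝ E) (_ : PosSMulStrictMono ℝ E) (_ : PosSMulReflectLT ℝ E)
    (_ : CompleteSpace E) (_ : TopologicalSpace.SeparableSpace E)
    (u : E) (T : C(K, ℝ) →ₗ[ℝ] E),
    0 ≤ u ∧ Function.Injective T ∧
      (∀ f g : C(K, ℝ), T (f ⊔ g) = T f ⊔ T g) ∧
      T 1 = u ∧
      Set.range T = {y : E | ∃ r : ℝ, 0 < r ∧ |y| ≤ r • u}

open BoundedContinuousFunction

/-- If `W` is a nonempty open subset of a compact metrizable space `K`, then the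
Stone–Čech compactification `βW` of `W` is a sick compactum. -/
theorem stmt_0 (K : Type) [TopologicalSpace K] [CompactSpace K]
    [TopologicalSpace.MetrizableSpace K] (W : Set K) (hW : IsOpen W) (hne : W.Nonempty) :
    IsSick (StoneCech ↥W) := by
  classical
  letI : MetricSpace K := TopologicalSpace.metrizableSpaceMetric K
  -- a continuous function vanishing exactly off `W`
  obtain ⟨d, hdc, hd0, hdpos, hdz⟩ : ∃ d : K → ℝ, Continuous d ∧ (∀ x, 0 ≤ d x) ∧
      (∀ x ∈ W, 0 < d x) ∧ (∀ x ∉ W, d x = 0) := by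
    by_cases h : Wᶜ = ∅
    · refine ⟨fun _ => 1, continuous_const, fun _ => zero_le_one, fun _ _ => zero_lt_one, ?_⟩
      intro x hx
      exact absurd (by simpa using (compl_empty_iff.mp h) ▸ Set.mem_univ x) hx
    · refine ⟨fun x => Metric.infDist x Wᶜ, Metric.continuous_infDist_pt _,
        fun _ => Metric.infDist_nonneg, ?_, ?_⟩
      · intro x hx
        exact (hW.isClosed_compl.notMem_iff_infDist_pos (nonempty_iff_ne_empty.mpr h)).mp
          (by simpa using hx)
      · intro x hx
        exact Metric.infDist_zero_of_mem (by simpa using hx)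
  -- the underlying function of `T f`
  set Tf : C(StoneCech ↥W, ℝ) → K → ℝ :=
    fun f x => if hx : x ∈ W then f (stoneCechUnit ⟨x, hx⟩) * d x else 0 with hTf
  have hbd : ∀ (f : C(StoneCech ↥W, ℝ)) (x : K), ‖Tf f x‖ ≤ ‖f‖ * d x := by
    intro f x
    by_cases hx : x ∈ W
    · simp only [hTf, dif_pos hx]
      rw [norm_mul, Real.norm_of_nonneg (hd0 x)]
      exact mul_le_mul_of_nonneg_right (f.norm_coe_le_norm _) (hd0 x)
    · simp only [hTf, dif_neg hx, norm_zero]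
      exact mul_nonneg (norm_nonneg f) (hd0 x)
  have hcont : ∀ f : C(StoneCech ↥W, ℝ), Continuous (Tf f) := by
    intro f
    rw [continuous_iff_continuousAt]
    intro x
    by_cases hx : x ∈ W
    · have hcr : Continuous (W.restrict (Tf f)) := by
        have : W.restrict (Tf f) = fun w : W => f (stoneCechUnit w) * d w := by
          funext w; exact dif_pos w.2
        rw [this]
        exact ((f.continuous.comp continuous_stoneCechUnit)).mul (hdc.comp continuous_subtype_val)
      exact ((continuousOn_iff_continuous_restrict.mpr hcr).continuousAt (hW.mem_nhds hx))
    · have hx0 : Tf f x = 0 := dif_neg hx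
      rw [ContinuousAt, hx0]
      apply squeeze_zero_norm (hbd f)
      have : Filter.Tendsto (fun y => ‖f‖ * d y) (nhds x) (nhds (‖f‖ * d x)) :=
        (hdc.tendsto x).const_mul _
      rwa [hdz x hx, mul_zero] at this
  -- the Banach lattice and the element u
  let u : K →ᵇ ℝ := BoundedContinuousFunction.mkOfCompact ⟨d, hdc⟩
  have hux : ∀ x, u x = d x := fun x => rfl
  -- the linear map
  let T : C(StoneCech ↥W, ℝ) →ₗ[ℝ] (K →ᵇ ℝ) :=
    { toFun := fun f => BoundedContinuousFunction.mkOfCompact ⟨Tf f, hcont f⟩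
      map_add' := by
        intro f g
        ext x
        simp only [BoundedContinuousFunction.mkOfCompact_apply, ContinuousMap.coe_mk,
          BoundedContinuousFunction.coe_add, Pi.add_apply, hTf]
        by_cases hx : x ∈ W
        · simp only [dif_pos hx, ContinuousMap.add_apply]; ring
        · simp [dif_neg hx]
      map_smul' := by
        intro c f
        ext x
        simp only [BoundedContinuousFunction.mkOfCompact_apply, ContinuousMap.coe_mk,
          BoundedContinuousFunction.coe_smul, Pi.smul_apply, smul_eq_mul, hTf, RingHom.id_apply]
        by_cases hx : x ∈ W
        · simp only [dif_pos hx, ContinuousMap.smul_apply, smul_eq_mul]; ring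
        · simp [dif_neg hx] }
  have hT : ∀ (f : C(StoneCech ↥W, ℝ)) (x : K), T f x = Tf f x := fun f x => rfl
  haveI : TopologicalSpace.SeparableSpace (K →ᵇ ℝ) :=
    (ContinuousMap.linearIsometryBoundedOfCompact K ℝ ℝ).surjective.denseRange.separableSpace
      (ContinuousMap.linearIsometryBoundedOfCompact K ℝ ℝ).continuous
  haveI : PosSMulMono ℝ (K →ᵇ ℝ) := by
    apply PosSMulMono.of_pos
    intro a hc b c hab x
    simp only [BoundedContinuousFunction.coe_smul, Pi.smul_apply, smul_eq_mul]
    exact mul_le_mul_of_nonneg_left (hab x) hc.le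
  haveI : PosSMulStrictMono ℝ (K →ᵇ ℝ) := ⟨fun a ha b c h => by
    refine lt_of_le_of_ne (smul_le_smul_of_nonneg_left h.le ha.le) ?_
    intro he
    exact h.ne (smul_right_injective (K →ᵇ ℝ) ha.ne' he)⟩
  refine ⟨K →ᵇ ℝ, inferInstance, inferInstance, inferInstance, inferInstance, inferInstance,
    inferInstance, inferInstance, inferInstance, inferInstance,
    u, T, ?_, ?_, ?_, ?_, ?_⟩
  · -- 0 ≤ u
    intro x
    exact hd0 x
  · -- injective
    intro f g hfg
    have key : ∀ w : W, f (stoneCechUnit w) = g (stoneCechUnit w) := by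
      intro w
      have h1 : Tf f w = Tf g w := DFunLike.congr_fun hfg (w : K)
      simp only [hTf, dif_pos w.2] at h1
      exact mul_right_cancel₀ (ne_of_gt (hdpos w w.2)) h1
    exact ContinuousMap.coe_injective (Continuous.ext_on denseRange_stoneCechUnit f.continuous
      g.continuous (by rintro _ ⟨w, rfl⟩; exact key w))
  · -- lattice hom
    intro f g
    ext x
    simp only [BoundedContinuousFunction.mkOfCompact_apply, ContinuousMap.coe_mk,
      BoundedContinuousFunction.coe_sup, Pi.sup_apply]
    show Tf (f ⊔ g) x = Tf f x ⊔ Tf g x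
    by_cases hx : x ∈ W
    · simp only [hTf, dif_pos hx, ContinuousMap.sup_apply]
      exact max_mul_of_nonneg _ _ (hd0 x)
    · simp [hTf, dif_neg hx]
  · -- T 1 = u
    ext x
    show Tf 1 x = d x
    by_cases hx : x ∈ W
    · simp [hTf, dif_pos hx]
    · simp [hTf, dif_neg hx, (hdz x hx).symm]
  · -- range
    ext y
    constructor
    · rintro ⟨f, rfl⟩
      refine ⟨‖f‖ + 1, by positivity, ?_⟩
      intro x
      show |Tf f x| ≤ (‖f‖ + 1) * d x
      calc |Tf f x| ≤ ‖f‖ * d x := hbd f x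
        _ ≤ (‖f‖ + 1) * d x := by nlinarith [hd0 x]
    · rintro ⟨r, hr, hle⟩
      have hyb : ∀ x, |y x| ≤ r * d x := fun x => hle x
      have hmem : ∀ w : W, y w / d w ∈ Set.Icc (-r) r := by
        intro w
        have hdw := hdpos w w.2
        have habs : |y w / d w| ≤ r := by
          rw [abs_div, abs_of_pos hdw, div_le_iff₀ hdw]
          exact hyb w
        exact Set.mem_Icc.mpr (abs_le.mp habs)
      have hf₀c : Continuous (fun w : ↥W => (⟨y w / d w, hmem w⟩ : Set.Icc (-r) r)) := by
        apply Continuous.subtype_mk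
        exact (y.continuous.comp continuous_subtype_val).div (hdc.comp continuous_subtype_val)
          (fun w => ne_of_gt (hdpos w w.2))
      refine ⟨⟨fun z => (stoneCechExtend hf₀c z).1,
        continuous_subtype_val.comp (continuous_stoneCechExtend hf₀c)⟩, ?_⟩
      ext x
      show Tf _ x = y x
      by_cases hx : x ∈ W
      · simp only [hTf, dif_pos hx, ContinuousMap.coe_mk]
        have h1 := congrFun (stoneCechExtend_extends hf₀c) (⟨x, hx⟩ : ↥W)
        have h2 : (stoneCechExtend hf₀c (stoneCechUnit (⟨x, hx⟩ : ↥W))).1 = y x / d x :=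
          congrArg Subtype.val h1
        rw [h2, div_mul_cancel₀ _ (ne_of_gt (hdpos x hx))]
      · have hy0 : y x = 0 := by
          have h1 : |y x| ≤ r * d x := hyb x
          rw [hdz x hx, mul_zero] at h1
          exact abs_eq_zero.mp (le_antisymm h1 (abs_nonneg _))
        simp [hTf, dif_neg hx, hy0]
end

section
/- Every sick compactum K satisfies the countable chain condition: every family of pairwise disjoint nonempty open subsets of K is countable. -/
open MeasureTheory Topology Filter Set

/-- Every sick compactum satisfies the countable chain condition: every family of pairwise
disjoint nonempty open subsets is countable. -/
theorem stmt_2 (K : Type*) [TopologicalSpace K] [CompactSpace K] [T2Space K]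
    (hK : IsSick K) (𝒰 : Set (Set K)) (hopen : ∀ U ∈ 𝒰, IsOpen U)
    (hne : ∀ U ∈ 𝒰, U.Nonempty) (hdisj : 𝒰.PairwiseDisjoint id) :
    𝒰.Countable := by
  obtain ⟨E, i1, i2, i3, i4, i5, i6, i7, i8, i9, u, T, hu, hinj, hsup, hTu, hrange⟩ := hK
  -- Urysohn: for each nonempty open U, a nonneg continuous function supported in U, nonzero
  have key : ∀ U ∈ 𝒰, ∃ f : C(K, ℝ), 0 ≤ f ∧ f ≠ 0 ∧ ∀ x ∉ U, f x = 0 := by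
    intro U hU
    obtain ⟨x, hx⟩ := hne U hU
    obtain ⟨f, hf0, hf1, hf01⟩ :=
      exists_continuous_zero_one_of_isCompact ((hopen U hU).isClosed_compl.isCompact)
        (isClosed_singleton (x := x))
        (Set.disjoint_left.2 fun a ha h => ha (h ▸ hx))
    refine ⟨f, fun y => (hf01 y).1, ?_, fun y hy => hf0 hy⟩
    intro h
    have := hf1 (Set.mem_singleton x)
    rw [h] at this
    simp at this
  choose! f hf0 hfne hfz using key
  -- T preserves inf
  have hinf : ∀ g h : C(K, ℝ), T (g ⊓ h) = T g ⊓ T h := by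
    intro g h
    have : g ⊓ h = -((-g) ⊔ (-h)) := by rw [← neg_inf, neg_neg]
    rw [this, map_neg, hsup, neg_sup, map_neg, map_neg, neg_neg, neg_neg]
  -- T of a nonneg function is nonneg
  have hTpos : ∀ g : C(K, ℝ), 0 ≤ g → 0 ≤ T g := by
    intro g hg
    have : g ⊔ 0 = g := sup_eq_left.2 hg
    have h2 := hsup g 0
    rw [this, map_zero] at h2
    rw [sup_comm] at h2
    exact le_of_sup_eq h2.symm
  -- the images are nonzero
  have hTne : ∀ U ∈ 𝒰, T (f U) ≠ 0 := by
    intro U hU h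
    exact hfne U hU (hinj (by rw [h, map_zero]))
  -- images of distinct members are disjoint
  have hdisjT : ∀ U ∈ 𝒰, ∀ V ∈ 𝒰, U ≠ V → T (f U) ⊓ T (f V) = 0 := by
    intro U hU V hV hUV
    rw [← hinf]
    have : f U ⊓ f V = 0 := by
      ext x
      by_cases hx : x ∈ U
      · have hxV : x ∉ V := fun hxV =>
          Set.disjoint_left.1 (hdisj hU hV hUV) hx hxV
        simp only [ContinuousMap.inf_apply, ContinuousMap.zero_apply, hfz V hV x hxV]
        exact inf_eq_right.2 (hf0 U hU x)
      · simp only [ContinuousMap.inf_apply, ContinuousMap.zero_apply, hfz U hU x hx]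
        exact inf_eq_left.2 (hf0 V hV x)
    rw [this, map_zero]
  -- norm separation: disjoint nonneg elements are far apart
  have hsep : ∀ a b : E, 0 ≤ a → 0 ≤ b → a ⊓ b = 0 → ‖a‖ ≤ ‖a - b‖ := by
    intro a b ha hb hab
    have habs : |a - b| = a ⊔ b := by
      have := sup_sub_inf_eq_abs_sub b a
      rw [inf_comm, hab, sub_zero, sup_comm] at this
      rw [← this]
    refine HasSolidNorm.solid ?_
    rw [habs, abs_of_nonneg ha]
    exact le_sup_left
  -- main argument: balls around the images are pairwise disjoint nonempty open sets in E
  apply Set.PairwiseDisjoint.countable_of_isOpen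
    (s := fun U => Metric.ball (T (f U)) (‖T (f U)‖ / 2))
  · intro U hU V hV hUV
    simp only [Function.onFun, id]
    rw [Set.disjoint_left]
    intro y hyU hyV
    rw [Metric.mem_ball] at hyU hyV
    have h1 : ‖T (f U)‖ ≤ ‖T (f U) - T (f V)‖ :=
      hsep _ _ (hTpos _ (hf0 U hU)) (hTpos _ (hf0 V hV)) (hdisjT U hU V hV hUV)
    have h2 : ‖T (f V)‖ ≤ ‖T (f U) - T (f V)‖ := by
      rw [norm_sub_rev]
      exact hsep _ _ (hTpos _ (hf0 V hV)) (hTpos _ (hf0 U hU))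
        (by rw [inf_comm]; exact hdisjT U hU V hV hUV)
    have h3 : ‖T (f U) - T (f V)‖ ≤ dist y (T (f U)) + dist y (T (f V)) := by
      rw [← dist_eq_norm]
      exact dist_triangle_left _ _ y
    linarith
  · intro U hU
    exact Metric.isOpen_ball
  · intro U hU
    have : 0 < ‖T (f U)‖ := norm_pos_iff.2 (hTne U hU)
    exact Metric.nonempty_ball.2 (by linarith)
end

section
/- If K is a sick compactum, then there exists a finite regular Borel measure μ on K that is strictly positive (μ(U) > 0 for every nonempty open U ⊆ K) and analytic. -/
open MeasureTheory Topology Filter Set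
open scoped ENNReal NNReal

section Aux
variable {E : Type} [NormedAddCommGroup E] [Lattice E] [IsOrderedAddMonoid E] [HasSolidNorm E]
  [NormedSpace ℝ E] [PosSMulStrictMono ℝ E] [PosSMulReflectLT ℝ E]

lemma smul_sup_eq {c : ℝ} (hc : 0 < c) (y z : E) : c • (y ⊔ z) = c • y ⊔ c • z :=
  (OrderIso.smulRight (β := E) hc).map_sup y z

/-- norming positive functional -/
lemma exists_pos_norming (x : E) (hx : 0 ≤ x) :
    ∃ φ : E →L[ℝ] ℝ, (∀ y, 0 ≤ y → 0 ≤ φ y) ∧ (∀ y, |φ y| ≤ ‖y‖) ∧ φ x = ‖x‖ := by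
  rcases eq_or_ne x 0 with rfl | hx0
  · exact ⟨0, fun y _ => le_rfl, fun y => by simp [norm_nonneg], by simp⟩
  -- sublinear functional
  set N : E → ℝ := fun y => ‖y ⊔ 0‖ with hN
  have N_hom : ∀ c : ℝ, 0 < c → ∀ y, N (c • y) = c * N y := by
    intro c hc y
    have h : (c • y) ⊔ 0 = c • (y ⊔ 0) := by
      rw [smul_sup_eq hc, smul_zero]
    simp only [hN, h, norm_smul, Real.norm_eq_abs, abs_of_pos hc]
  have N_add : ∀ y z, N (y + z) ≤ N y + N z := by
    intro y z
    have h1 : (y + z) ⊔ 0 ≤ y ⊔ 0 + (z ⊔ 0) := by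
      apply sup_le
      · exact add_le_add le_sup_left le_sup_left
      · exact add_nonneg le_sup_right le_sup_right
    have h2 : ‖(y + z) ⊔ 0‖ ≤ ‖y ⊔ 0 + (z ⊔ 0)‖ := by
      apply HasSolidNorm.solid
      rw [abs_of_nonneg le_sup_right, abs_of_nonneg (add_nonneg le_sup_right le_sup_right)]
      exact h1
    exact h2.trans (norm_add_le _ _)
  -- the partial linear map on the span of x
  set f : E →ₗ.[ℝ] ℝ := LinearPMap.mkSpanSingleton' x ‖x‖
    (fun c hc => by
      rcases smul_eq_zero.mp hc with h | h
      · simp [h]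
      · exact absurd h hx0)
    with hf_def
  have hf : ∀ z : f.domain, f z ≤ N z := by
    rintro ⟨z, hz⟩
    rcases Submodule.mem_span_singleton.mp hz with ⟨c, rfl⟩
    rw [LinearPMap.mkSpanSingleton'_apply]
    rcases le_or_gt 0 c with hc | hc
    · rcases eq_or_lt_of_le hc with rfl | hc
      · simp [hN]
      · rw [N_hom c hc]
        have hNx : N x = ‖x‖ := by
          simp only [hN, sup_of_le_left hx]
        rw [hNx, smul_eq_mul, RingHom.id_apply]
    · have hlt : c • ‖x‖ < 0 := by
        rw [smul_eq_mul]
        exact mul_neg_of_neg_of_pos hc (norm_pos_iff.mpr hx0)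
      exact hlt.le.trans (norm_nonneg _)
  obtain ⟨g, hg1, hg2⟩ := exists_extension_of_le_sublinear f N N_hom N_add hf
  have hNle : ∀ y : E, N y ≤ ‖y‖ := by
    intro y
    have : ‖y ⊔ 0‖ ≤ ‖|y|‖ := by
      apply HasSolidNorm.solid
      rw [abs_of_nonneg le_sup_right, abs_abs]
      exact sup_le (le_abs_self y) (abs_nonneg y)
    simpa [hN, norm_abs_eq_norm] using this
  have hg_bound : ∀ y, |g y| ≤ ‖y‖ := by
    intro y
    rw [abs_le]
    constructor
    · have h1 := hg2 (-y)
      rw [map_neg] at h1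
      have h2 : N (-y) ≤ ‖-y‖ := hNle (-y)
      rw [norm_neg] at h2
      linarith
    · exact (hg2 y).trans (hNle y)
  refine ⟨LinearMap.mkContinuous g 1 (fun y => by
      rw [one_mul, Real.norm_eq_abs]; exact hg_bound y), ?_, ?_, ?_⟩
  · intro y hy
    have h1 := hg2 (-y)
    rw [map_neg] at h1
    have hN0 : N (-y) = 0 := by
      simp only [hN]
      rw [sup_eq_right.mpr (neg_nonpos.mpr hy), norm_zero]
    rw [hN0] at h1
    simpa using by linarith
  · intro y; exact hg_bound y
  · have hx_mem : x ∈ f.domain := by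
      rw [hf_def, LinearPMap.domain_mkSpanSingleton]
      exact Submodule.mem_span_singleton_self x
    have h := hg1 ⟨x, hx_mem⟩
    rw [LinearPMap.mkSpanSingleton'_apply_self] at h
    simpa using h
variable [CompleteSpace E] [TopologicalSpace.SeparableSpace E]

omit [CompleteSpace E] in
lemma exists_strictly_pos_functional :
    ∃ φ : E →L[ℝ] ℝ, (∀ y : E, 0 ≤ y → 0 ≤ φ y) ∧ (∀ y : E, 0 ≤ y → y ≠ 0 → 0 < φ y) := by
  obtain ⟨s, hs⟩ := TopologicalSpace.exists_dense_seq E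
  choose φ hφpos hφbd hφnorm using fun n => exists_pos_norming (|s n|) (abs_nonneg _)
  have hsum : Summable (fun n => ((2:ℝ)⁻¹ ^ n) • φ n) := by
    apply Summable.of_norm_bounded (g := fun n => (2:ℝ)⁻¹ ^ n)
      (summable_geometric_of_lt_one (by norm_num) (by norm_num))
    intro n
    refine (ContinuousLinearMap.opNorm_smul_le _ _).trans ?_
    have h1 : ‖φ n‖ ≤ 1 := by
      apply ContinuousLinearMap.opNorm_le_bound _ zero_le_one
      intro y
      rw [one_mul, Real.norm_eq_abs]
      exact hφbd n y
    calc ‖(2:ℝ)⁻¹ ^ n‖ * ‖φ n‖ ≤ ‖(2:ℝ)⁻¹ ^ n‖ * 1 := by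
          exact mul_le_mul_of_nonneg_left h1 (norm_nonneg _)
      _ = (2:ℝ)⁻¹ ^ n := by
          rw [mul_one, Real.norm_eq_abs, abs_of_pos (by positivity)]
  set Φ : E →L[ℝ] ℝ := ∑' n, ((2:ℝ)⁻¹ ^ n) • φ n with hΦ
  have happly : ∀ y : E, Φ y = ∑' n, ((2:ℝ)⁻¹ ^ n) * φ n y := by
    intro y
    have := (ContinuousLinearMap.apply ℝ ℝ y).map_tsum hsum
    simpa [hΦ] using this
  have hterm_sum : ∀ y : E, Summable (fun n => ((2:ℝ)⁻¹ ^ n) * φ n y) := by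
    intro y
    have := (hsum.map (ContinuousLinearMap.apply ℝ ℝ y) (ContinuousLinearMap.apply ℝ ℝ y).continuous)
    simpa [Function.comp_def] using this
  have hpos : ∀ y : E, 0 ≤ y → 0 ≤ Φ y := by
    intro y hy
    rw [happly]
    apply tsum_nonneg
    intro n
    exact mul_nonneg (by positivity) (hφpos n y hy)
  refine ⟨Φ, hpos, ?_⟩
  intro y hy hy0
  have hny : 0 < ‖y‖ := norm_pos_iff.mpr hy0
  obtain ⟨n, hn⟩ := hs.exists_dist_lt y (by positivity : (0:ℝ) < ‖y‖/3)
  have hdist : ‖s n - y‖ < ‖y‖ / 3 := by rw [← dist_eq_norm, dist_comm]; exact hn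
  -- φ n y is big
  have h1 : φ n (|s n|) = ‖s n‖ := by rw [hφnorm n, norm_abs_eq_norm]
  have h2 : φ n (|s n|) - φ n y ≤ ‖s n - y‖ := by
    have : φ n (|s n|) - φ n y = φ n (|s n| - y) := by rw [map_sub]
    rw [this]
    calc φ n (|s n| - y) ≤ |φ n (|s n| - y)| := le_abs_self _
      _ ≤ ‖|s n| - y‖ := hφbd n _
      _ = ‖|s n| - |y|‖ := by rw [abs_of_nonneg hy]
      _ ≤ ‖s n - y‖ := norm_abs_sub_abs _ _
  have h3 : ‖y‖ - ‖s n - y‖ ≤ ‖s n‖ := by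
    have h5 := norm_sub_norm_le y (s n)
    rw [norm_sub_rev] at h5
    linarith
  have hφny : ‖y‖ / 3 < φ n y := by
    have : φ n y ≥ φ n (|s n|) - ‖s n - y‖ := by linarith [h2]
    rw [h1] at this
    linarith
  have hterm : (0:ℝ) < ((2:ℝ)⁻¹ ^ n) * φ n y :=
    mul_pos (by positivity) (lt_trans (by positivity) hφny)
  rw [happly]
  calc (0:ℝ) < ((2:ℝ)⁻¹ ^ n) * φ n y := hterm
    _ ≤ ∑' m, ((2:ℝ)⁻¹ ^ m) * φ m y := by
        apply Summable.le_tsum (hterm_sum y) n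
        intro m _
        exact mul_nonneg (by positivity) (hφpos m y hy)

end Aux

section Riesz
variable {K : Type} [TopologicalSpace K] [CompactSpace K] [T2Space K]
  [MeasurableSpace K] [BorelSpace K]

lemma clamp_eq (a x y : ℝ) (hxy : x ≤ y) :
    min (max (a - x) 0) (y - x) = min a y - min a x := by
  simp only [min_def, max_def]
  split_ifs <;> linarith

variable (ψ : C(K, ℝ) →ₗ[ℝ] ℝ)

lemma psi_mono (hψ : ∀ f : C(K, ℝ), 0 ≤ f → 0 ≤ ψ f) {f g : C(K, ℝ)} (h : f ≤ g) :
    ψ f ≤ ψ g := by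
  have h0 : 0 ≤ ψ (g - f) := hψ _ (by rwa [sub_nonneg])
  rw [map_sub] at h0
  linarith

lemma riesz_measure_exists
    (hψ : ∀ f : C(K, ℝ), 0 ≤ f → 0 ≤ ψ f)
    (hstrict : ∀ f : C(K, ℝ), 0 ≤ f → f ≠ 0 → 0 < ψ f) :
    ∃ (μ : Measure K), IsFiniteMeasure μ ∧ μ.Regular ∧
      (∀ U : Set K, IsOpen U → U.Nonempty → 0 < μ U) ∧
      (∀ f : C(K, ℝ), 0 ≤ f → ∫⁻ x, ENNReal.ofReal (f x) ∂μ ≤ ENNReal.ofReal (ψ f)) := by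
  classical
  have hone : (0 : C(K, ℝ)) ≤ 1 := by
    rw [ContinuousMap.le_def]; intro x; simp
  -- the test sets and the real-valued content
  set TS : Set K → Set ℝ := fun C => (fun f => ψ f) '' {f : C(K, ℝ) | 0 ≤ f ∧ ∀ x ∈ C, 1 ≤ f x}
    with hTS
  have TS_nonempty : ∀ C : Set K, (TS C).Nonempty := by
    intro C
    exact ⟨ψ 1, ⟨1, ⟨hone, fun x _ => by simp⟩, rfl⟩⟩
  have TS_bdd : ∀ C : Set K, BddBelow (TS C) := by
    intro C
    refine ⟨0, ?_⟩
    rintro r ⟨f, ⟨hf0, -⟩, rfl⟩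
    exact hψ f hf0
  set cR : Set K → ℝ := fun C => sInf (TS C) with hcR
  have cR_nonneg : ∀ C, 0 ≤ cR C := by
    intro C
    apply le_csInf (TS_nonempty C)
    rintro r ⟨f, ⟨hf0, -⟩, rfl⟩
    exact hψ f hf0
  have cR_le : ∀ (C : Set K) (f : C(K, ℝ)), 0 ≤ f → (∀ x ∈ C, 1 ≤ f x) → cR C ≤ ψ f := by
    intro C f hf0 hf1
    exact csInf_le (TS_bdd C) ⟨f, ⟨hf0, hf1⟩, rfl⟩
  have le_cR : ∀ (C : Set K) (b : ℝ), (∀ f : C(K, ℝ), 0 ≤ f → (∀ x ∈ C, 1 ≤ f x) → b ≤ ψ f) →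
      b ≤ cR C := by
    intro C b hb
    apply le_csInf (TS_nonempty C)
    rintro r ⟨f, ⟨hf0, hf1⟩, rfl⟩
    exact hb f hf0 hf1
  have cR_mono : ∀ C₁ C₂ : Set K, C₁ ⊆ C₂ → cR C₁ ≤ cR C₂ := by
    intro C₁ C₂ hsub
    apply csInf_le_csInf (TS_bdd C₁) (TS_nonempty C₂)
    rintro r ⟨f, ⟨hf0, hf1⟩, rfl⟩
    exact ⟨f, ⟨hf0, fun x hx => hf1 x (hsub hx)⟩, rfl⟩
  -- subadditivity
  have cR_subadd : ∀ C₁ C₂ : Set K, cR (C₁ ∪ C₂) ≤ cR C₁ + cR C₂ := by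
    intro C₁ C₂
    apply le_of_forall_pos_le_add
    intro ε hε
    obtain ⟨r₁, ⟨f₁, ⟨hf₁0, hf₁1⟩, rfl⟩, hr₁⟩ :=
      exists_lt_of_csInf_lt (TS_nonempty C₁) (lt_add_of_pos_right (cR C₁) (half_pos hε))
    obtain ⟨r₂, ⟨f₂, ⟨hf₂0, hf₂1⟩, rfl⟩, hr₂⟩ :=
      exists_lt_of_csInf_lt (TS_nonempty C₂) (lt_add_of_pos_right (cR C₂) (half_pos hε))
    have htest : ∀ x ∈ C₁ ∪ C₂, 1 ≤ (f₁ + f₂) x := by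
      rintro x (hx | hx)
      · have := hf₂0
        rw [ContinuousMap.le_def] at this
        have h2 := this x
        simp only [ContinuousMap.zero_apply] at h2
        simp only [ContinuousMap.add_apply]
        linarith [hf₁1 x hx]
      · have := hf₁0
        rw [ContinuousMap.le_def] at this
        have h1 := this x
        simp only [ContinuousMap.zero_apply] at h1
        simp only [ContinuousMap.add_apply]
        linarith [hf₂1 x hx]
    have := cR_le (C₁ ∪ C₂) (f₁ + f₂) (add_nonneg hf₁0 hf₂0) htest
    rw [map_add] at this
    linarith
  -- additivity on disjoint compact-closed sets
  have cR_disj : ∀ C₁ C₂ : Set K, IsClosed C₁ → IsClosed C₂ → Disjoint C₁ C₂ →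
      cR C₁ + cR C₂ ≤ cR (C₁ ∪ C₂) := by
    intro C₁ C₂ h₁ h₂ hd
    apply le_cR
    intro f hf0 hf1
    obtain ⟨g, hg0, hg1, hg01⟩ := exists_continuous_zero_one_of_isClosed h₂ h₁ hd.symm
    have hfg0 : (0 : C(K, ℝ)) ≤ f * g := by
      rw [ContinuousMap.le_def]
      intro x
      rw [ContinuousMap.le_def] at hf0
      have := hf0 x
      simp only [ContinuousMap.zero_apply] at this ⊢
      simp only [ContinuousMap.mul_apply]
      exact mul_nonneg this (hg01 x).1
    have hfg0' : (0 : C(K, ℝ)) ≤ f * (1 - g) := by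
      rw [ContinuousMap.le_def]
      intro x
      rw [ContinuousMap.le_def] at hf0
      have := hf0 x
      simp only [ContinuousMap.zero_apply] at this ⊢
      simp only [ContinuousMap.mul_apply, ContinuousMap.sub_apply, ContinuousMap.one_apply]
      exact mul_nonneg this (by linarith [(hg01 x).2])
    have h1 : cR C₁ ≤ ψ (f * g) := by
      apply cR_le _ _ hfg0
      intro x hx
      have := hg1 hx
      simp only [ContinuousMap.mul_apply]
      simp only [Pi.one_apply] at this
      rw [this, mul_one]
      exact hf1 x (Or.inl hx)
    have h2 : cR C₂ ≤ ψ (f * (1 - g)) := by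
      apply cR_le _ _ hfg0'
      intro x hx
      have := hg0 hx
      simp only [ContinuousMap.mul_apply, ContinuousMap.sub_apply, ContinuousMap.one_apply]
      simp only [Pi.zero_apply] at this
      rw [this, sub_zero, mul_one]
      exact hf1 x (Or.inr hx)
    have hsum : ψ (f * g) + ψ (f * (1 - g)) = ψ f := by
      rw [← map_add]
      congr 1
      ring
    linarith
  -- the content
  set μc : Content K :=
    { toFun := fun C => Real.toNNReal (cR C)
      mono' := fun C₁ C₂ h => Real.toNNReal_mono (cR_mono _ _ h)
      sup_disjoint' := by
        intro C₁ C₂ hd hc₁ hc₂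
        have heq : cR (↑C₁ ∪ ↑C₂) = cR ↑C₁ + cR ↑C₂ :=
          le_antisymm (cR_subadd _ _) (cR_disj _ _ hc₁ hc₂ hd)
        simp only [TopologicalSpace.Compacts.coe_sup]
        rw [heq, Real.toNNReal_add (cR_nonneg _) (cR_nonneg _)]
      sup_le' := by
        intro C₁ C₂
        simp only [TopologicalSpace.Compacts.coe_sup]
        calc Real.toNNReal (cR (↑C₁ ∪ ↑C₂)) ≤ Real.toNNReal (cR ↑C₁ + cR ↑C₂) :=
              Real.toNNReal_mono (cR_subadd _ _)
          _ = Real.toNNReal (cR ↑C₁) + Real.toNNReal (cR ↑C₂) :=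
              Real.toNNReal_add (cR_nonneg _) (cR_nonneg _) } with hμc
  set μ : Measure K := μc.measure with hμ
  have hreg : μ.Regular := by infer_instance
  -- value on open sets
  have hμ_open_le : ∀ (U : Set K) (hU : IsOpen U) (C : Set K), IsCompact C → U ⊆ C →
      μ U ≤ (Real.toNNReal (cR C) : ℝ≥0∞) := by
    intro U hU C hC hUC
    rw [hμ, μc.measure_apply hU.measurableSet, μc.outerMeasure_of_isOpen U hU]
    exact μc.innerContent_le ⟨U, hU⟩ ⟨C, hC⟩ hUC
  have hμ_open_ge : ∀ (U : Set K) (hU : IsOpen U) (C : Set K) (hC : IsCompact C), C ⊆ U →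
      (Real.toNNReal (cR C) : ℝ≥0∞) ≤ μ U := by
    intro U hU C hC hCU
    rw [hμ, μc.measure_apply hU.measurableSet, μc.outerMeasure_of_isOpen U hU]
    exact μc.le_innerContent ⟨C, hC⟩ ⟨U, hU⟩ hCU
  have hμuniv : μ univ ≤ ENNReal.ofReal (ψ 1) := by
    refine (hμ_open_le univ isOpen_univ univ isCompact_univ (subset_refl _)).trans ?_
    rw [ENNReal.ofReal]
    exact ENNReal.coe_mono (Real.toNNReal_mono (cR_le univ 1 hone (fun x _ => by simp)))
  have hfin : IsFiniteMeasure μ := by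
    constructor
    exact hμuniv.trans_lt ENNReal.ofReal_lt_top
  -- strict positivity
  have hpos : ∀ U : Set K, IsOpen U → U.Nonempty → 0 < μ U := by
    intro U hU ⟨x, hx⟩
    obtain ⟨C, hCcomp, hxint, hCU⟩ := exists_compact_subset hU hx
    obtain ⟨g, hg0, hg1, hg01⟩ := exists_continuous_zero_one_of_isClosed
      (isOpen_interior.isClosed_compl) (isClosed_singleton (x := x))
      (by rwa [Set.disjoint_singleton_right, mem_compl_iff, not_not])
    have hgnn : (0 : C(K, ℝ)) ≤ g := by
      rw [ContinuousMap.le_def]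
      intro y
      simpa using (hg01 y).1
    have hgne : g ≠ 0 := by
      intro h
      have := hg1 (mem_singleton x)
      rw [h] at this
      simp at this
    have hψg : 0 < ψ g := hstrict g hgnn hgne
    have hcRC : ψ g ≤ cR C := by
      apply le_cR
      intro f hf0 hf1
      apply psi_mono ψ hψ
      rw [ContinuousMap.le_def]
      intro y
      by_cases hy : y ∈ interior C
      · calc g y ≤ 1 := (hg01 y).2
          _ ≤ f y := hf1 y (interior_subset hy)
      · have : g y = 0 := by
          have := hg0 (Set.mem_compl hy)
          simpa using this
        rw [this]
        rw [ContinuousMap.le_def] at hf0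
        simpa using hf0 y
    have := hμ_open_ge U hU C hCcomp hCU
    refine lt_of_lt_of_le ?_ this
    rw [ENNReal.coe_pos, Real.toNNReal_pos]
    linarith
  -- the integral bound
  have hint : ∀ f : C(K, ℝ), 0 ≤ f → ∫⁻ x, ENNReal.ofReal (f x) ∂μ ≤ ENNReal.ofReal (ψ f) := by
    intro f hf0
    have hfx0 : ∀ x, 0 ≤ f x := by
      intro x
      rw [ContinuousMap.le_def] at hf0
      simpa using hf0 x
    have hψ1 : 0 ≤ ψ 1 := hψ 1 hone
    refine ENNReal.le_of_forall_pos_le_add ?_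
    intro ε hε _
    have hεR : (0:ℝ) < ε := hε
    set h : ℝ := (ε : ℝ) / (ψ 1 + 1) with hh
    have hhpos : 0 < h := by positivity
    set n : ℕ := ⌈‖f‖ / h⌉₊ with hn
    have hfn : ∀ x, f x ≤ n * h := by
      intro x
      have h1 : f x ≤ ‖f‖ := by
        calc f x ≤ |f x| := le_abs_self _
          _ = ‖f x‖ := (Real.norm_eq_abs _).symm
          _ ≤ ‖f‖ := f.norm_coe_le_norm x
      have h2 : ‖f‖ / h ≤ n := Nat.le_ceil _
      calc f x ≤ ‖f‖ := h1
        _ ≤ n * h := by rw [← div_le_iff₀ hhpos] at *; exact h2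
    set q : ℕ → C(K, ℝ) := fun j => ((f - (((j : ℝ) * h)) • 1) ⊔ 0) ⊓ (h • 1) with hq
    have hq_apply : ∀ (j : ℕ) (x : K), q j x = min (max (f x - (j : ℝ) * h) 0) h := by
      intro j x
      simp only [hq, ContinuousMap.inf_apply, ContinuousMap.sup_apply, ContinuousMap.sub_apply,
        ContinuousMap.smul_apply, ContinuousMap.one_apply, ContinuousMap.zero_apply,
        smul_eq_mul, mul_one]
    have hq_nonneg : ∀ j, (0 : C(K, ℝ)) ≤ q j := by
      intro j
      rw [ContinuousMap.le_def]
      intro x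
      simp only [ContinuousMap.zero_apply]
      rw [hq_apply]
      exact le_min (le_max_right _ _) hhpos.le
    have hq_le_h : ∀ (j : ℕ) (x : K), q j x ≤ h := by
      intro j x
      rw [hq_apply]
      exact min_le_right _ _
    have hsum_q : ∀ (x : K) (m : ℕ), ∑ j ∈ Finset.range m, q j x = min (f x) (m * h) := by
      intro x m
      have htele := Finset.sum_range_sub (fun j => min (f x) ((j : ℝ) * h)) m
      have hcongr : ∑ j ∈ Finset.range m, q j x
          = ∑ j ∈ Finset.range m, (min (f x) (((j+1 : ℕ) : ℝ) * h) - min (f x) ((j : ℝ) * h)) := by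
        apply Finset.sum_congr rfl
        intro j _
        rw [hq_apply]
        have hkey := clamp_eq (f x) ((j : ℝ) * h) ((j : ℝ) * h + h) (by linarith)
        have e1 : (j : ℝ) * h + h - (j : ℝ) * h = h := by ring
        have e2 : (((j+1 : ℕ) : ℝ)) * h = (j : ℝ) * h + h := by push_cast; ring
        rw [e1] at hkey
        rw [hkey, e2]
      rw [hcongr, htele]
      simp only [Nat.cast_zero, zero_mul]
      rw [min_eq_right (hfx0 x), sub_zero]
    have hf_eq : ∀ x : K, f x = ∑ j ∈ Finset.range (n+1), q j x := by
      intro x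
      rw [hsum_q x (n+1)]
      rw [min_eq_left]
      have := hfn x
      push_cast
      push_cast at this
      nlinarith [hhpos.le]
    have hsum_le : ∀ x : K, ∑ j ∈ Finset.range n, q j x ≤ f x := by
      intro x
      rw [hsum_q x n]
      exact min_le_left _ _
    -- split the integral
    have hmeas : ∀ j ∈ Finset.range (n+1), Measurable fun x => ENNReal.ofReal (q j x) :=
      fun j _ => (map_continuous (q j)).measurable.ennreal_ofReal
    have hsplit : ∫⁻ x, ENNReal.ofReal (f x) ∂μ
        = ∑ j ∈ Finset.range (n+1), ∫⁻ x, ENNReal.ofReal (q j x) ∂μ := by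
      rw [← lintegral_finset_sum _ hmeas]
      apply lintegral_congr
      intro x
      rw [← ENNReal.ofReal_sum_of_nonneg (fun j _ => by
        have := hq_nonneg j
        rw [ContinuousMap.le_def] at this
        simpa using this x)]
      rw [hf_eq x]
    -- term bounds
    have hterm : ∀ j : ℕ, ∫⁻ x, ENNReal.ofReal (q j x) ∂μ
        ≤ ENNReal.ofReal h * μ {x | (j : ℝ) * h < f x} := by
      intro j
      have hopen : IsOpen {x : K | (j : ℝ) * h < f x} :=
        isOpen_lt continuous_const (map_continuous f)
      calc ∫⁻ x, ENNReal.ofReal (q j x) ∂μ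
          ≤ ∫⁻ x, ({x : K | (j : ℝ) * h < f x}.indicator (fun _ => ENNReal.ofReal h)) x ∂μ := by
            apply lintegral_mono
            intro x
            by_cases hx : (j : ℝ) * h < f x
            · rw [Set.indicator_of_mem (show x ∈ {x : K | (j : ℝ) * h < f x} from hx)]
              exact ENNReal.ofReal_le_ofReal (hq_le_h j x)
            · rw [Set.indicator_of_notMem (show x ∉ {x : K | (j : ℝ) * h < f x} from hx)]
              have hq0 : q j x = 0 := by
                rw [hq_apply]
                push_neg at hx
                rw [max_eq_right (by linarith), min_eq_left hhpos.le]
              simp [hq0]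
        _ = ENNReal.ofReal h * μ {x : K | (j : ℝ) * h < f x} :=
            lintegral_indicator_const hopen.measurableSet _
    -- measure bounds
    have hμset : ∀ i : ℕ, μ {x : K | ((i+1 : ℕ) : ℝ) * h < f x} ≤ ENNReal.ofReal (ψ (q i) / h) := by
      intro i
      have hopen : IsOpen {x : K | ((i+1 : ℕ) : ℝ) * h < f x} :=
        isOpen_lt continuous_const (map_continuous f)
      set C : Set K := {x : K | ((i+1 : ℕ) : ℝ) * h ≤ f x} with hC
      have hCclosed : IsClosed C := isClosed_le continuous_const (map_continuous f)
      have hCcomp : IsCompact C := hCclosed.isCompact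
      have hsub : {x : K | ((i+1 : ℕ) : ℝ) * h < f x} ⊆ C := Set.setOf_subset_setOf.mpr (fun x => le_of_lt)
      have h1 := hμ_open_le _ hopen C hCcomp hsub
      refine h1.trans ?_
      have htest0 : (0 : C(K, ℝ)) ≤ h⁻¹ • q i := by
        rw [ContinuousMap.le_def]
        intro x
        simp only [ContinuousMap.zero_apply, ContinuousMap.smul_apply, smul_eq_mul]
        have := hq_nonneg i
        rw [ContinuousMap.le_def] at this
        have h2 := this x
        simp only [ContinuousMap.zero_apply] at h2
        positivity
      have htest1 : ∀ x ∈ C, 1 ≤ (h⁻¹ • q i) x := by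
        intro x hx
        rw [hC] at hx
        simp only [Set.mem_setOf_eq] at hx
        have hqx : q i x = h := by
          rw [hq_apply]
          have e2 : (((i+1 : ℕ) : ℝ)) * h = (i : ℝ) * h + h := by push_cast; ring
          rw [e2] at hx
          rw [max_eq_left (by linarith), min_eq_right (by linarith)]
        simp only [ContinuousMap.smul_apply, smul_eq_mul, hqx]
        rw [inv_mul_cancel₀ hhpos.ne']
      have h2 : cR C ≤ ψ (h⁻¹ • q i) := cR_le C _ htest0 htest1
      have h3 : ψ (h⁻¹ • q i) = ψ (q i) / h := by
        rw [_root_.map_smul, smul_eq_mul]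
        ring
      rw [ENNReal.ofReal]
      exact ENNReal.coe_mono (Real.toNNReal_mono (by rw [← h3]; exact h2))
    -- put it together
    have hψq_nonneg : ∀ i : ℕ, 0 ≤ ψ (q i) := fun i => hψ _ (hq_nonneg i)
    calc ∫⁻ x, ENNReal.ofReal (f x) ∂μ
        = ∑ j ∈ Finset.range (n+1), ∫⁻ x, ENNReal.ofReal (q j x) ∂μ := hsplit
      _ = (∑ i ∈ Finset.range n, ∫⁻ x, ENNReal.ofReal (q (i+1) x) ∂μ)
          + ∫⁻ x, ENNReal.ofReal (q 0 x) ∂μ := Finset.sum_range_succ' _ n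
      _ ≤ (∑ i ∈ Finset.range n, ENNReal.ofReal (ψ (q i)))
          + ENNReal.ofReal (h * ψ 1) := by
          apply add_le_add
          · apply Finset.sum_le_sum
            intro i _
            refine (hterm (i+1)).trans ?_
            have := hμset i
            calc ENNReal.ofReal h * μ {x : K | ((i+1 : ℕ) : ℝ) * h < f x}
                ≤ ENNReal.ofReal h * ENNReal.ofReal (ψ (q i) / h) := by
                  exact mul_le_mul_right (hμset i) _
              _ = ENNReal.ofReal (h * (ψ (q i) / h)) := by
                  rw [← ENNReal.ofReal_mul hhpos.le]
              _ = ENNReal.ofReal (ψ (q i)) := by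
                  congr 1
                  field_simp
          · refine (hterm 0).trans ?_
            calc ENNReal.ofReal h * μ {x : K | ((0 : ℕ) : ℝ) * h < f x}
                ≤ ENNReal.ofReal h * μ univ := by
                  exact mul_le_mul_right (measure_mono (subset_univ _)) _
              _ ≤ ENNReal.ofReal h * ENNReal.ofReal (ψ 1) := mul_le_mul_right hμuniv _
              _ = ENNReal.ofReal (h * ψ 1) := by rw [← ENNReal.ofReal_mul hhpos.le]
      _ ≤ ENNReal.ofReal (ψ f) + ↑ε := by
          apply add_le_add
          · rw [← ENNReal.ofReal_sum_of_nonneg (fun i _ => hψq_nonneg i)]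
            apply ENNReal.ofReal_le_ofReal
            rw [← map_sum]
            apply psi_mono ψ hψ
            rw [ContinuousMap.le_def]
            intro x
            calc (∑ i ∈ Finset.range n, q i) x = ∑ i ∈ Finset.range n, q i x := by
                  rw [ContinuousMap.coe_sum]; simp
              _ ≤ f x := hsum_le x
          · have : h * ψ 1 ≤ (ε : ℝ) := by
              rw [hh]
              rw [div_mul_eq_mul_div, div_le_iff₀ (by positivity)]
              nlinarith [hψ1, hεR]
            calc ENNReal.ofReal (h * ψ 1) ≤ ENNReal.ofReal (ε : ℝ) :=
                  ENNReal.ofReal_le_ofReal this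
              _ = (ε : ℝ≥0∞) := ENNReal.ofReal_coe_nnreal
  exact ⟨μ, hfin, hreg, hpos, hint⟩

end Riesz


set_option maxHeartbeats 1000000 in
/-- Every sick compactum carries a strictly positive analytic finite regular Borel measure:
`L¹(μ)` is separable and the image of `C(K, ℝ)` in `L¹(μ)` is an analytic set. -/
theorem stmt_3 (K : Type) [TopologicalSpace K] [CompactSpace K] [T2Space K]
    [MeasurableSpace K] [BorelSpace K] (hK : IsSick K) :
    ∃ (μ : Measure K) (_ : IsFiniteMeasure μ) (_ : μ.Regular),
      (∀ U : Set K, IsOpen U → U.Nonempty → 0 < μ U) ∧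
      TopologicalSpace.SeparableSpace (Lp ℝ 1 μ) ∧
      MeasureTheory.AnalyticSet (Set.range (ContinuousMap.toLp 1 μ ℝ : C(K, ℝ) →L[ℝ] Lp ℝ 1 μ)) := by
  classical
  obtain ⟨E, i1, i2, i3, i4, i5, i6, i7, i8, i9, u, T, hu, hinj, hsupT, hT1, hrange⟩ := hK
  letI := i1
  letI := i2
  letI := i3
  letI := i4
  letI := i5
  -- lattice homomorphism facts
  have hTabs : ∀ f : C(K, ℝ), T |f| = |T f| := by
    intro f
    have h1 : |f| = f ⊔ (-f) := rfl
    have h2 : |T f| = T f ⊔ (-(T f)) := rfl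
    rw [h1, hsupT, map_neg, h2]
  have hTpos : ∀ f : C(K, ℝ), 0 ≤ f → 0 ≤ T f := by
    intro f hf
    have h1 : f ⊔ 0 = f := sup_eq_left.mpr hf
    have h2 := hsupT f 0
    rw [h1, map_zero] at h2
    exact sup_eq_left.mp h2.symm
  -- the strictly positive functional
  obtain ⟨φ, hφpos, hφstrict⟩ := exists_strictly_pos_functional (E := E)
  set ψ : C(K, ℝ) →ₗ[ℝ] ℝ := φ.toLinearMap.comp T with hψdef
  have hψ : ∀ f : C(K, ℝ), 0 ≤ f → 0 ≤ ψ f := fun f hf => hφpos _ (hTpos f hf)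
  have hψstrict : ∀ f : C(K, ℝ), 0 ≤ f → f ≠ 0 → 0 < ψ f := by
    intro f hf hf0
    refine hφstrict _ (hTpos f hf) ?_
    intro h
    exact hf0 (hinj (by rw [h, map_zero]))
  -- the measure
  obtain ⟨μ, hfin, hreg, hpos, hint⟩ := riesz_measure_exists ψ hψ hψstrict
  haveI := hfin
  haveI := hreg
  -- the key norm bound
  have hbound : ∀ g : C(K, ℝ),
      ‖(ContinuousMap.toLp 1 μ ℝ : C(K, ℝ) →L[ℝ] Lp ℝ 1 μ) g‖ ≤ ‖φ‖ * ‖T g‖ := by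
    intro g
    have habs_nonneg : (0 : C(K, ℝ)) ≤ |g| := by
      rw [ContinuousMap.le_def]
      intro x
      simp only [ContinuousMap.zero_apply, ContinuousMap.abs_apply]
      exact abs_nonneg _
    have h1 : eLpNorm (⇑g) 1 μ = ∫⁻ x, ENNReal.ofReal ((|g| : C(K, ℝ)) x) ∂μ := by
      rw [eLpNorm_one_eq_lintegral_enorm]
      apply lintegral_congr
      intro x
      rw [ContinuousMap.abs_apply, ← Real.norm_eq_abs, ofReal_norm_eq_enorm]
    have h2 : ψ |g| ≤ ‖φ‖ * ‖T g‖ := by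
      have he : ψ |g| = φ (|T g|) := by rw [hψdef, LinearMap.comp_apply, hTabs]; rfl
      rw [he]
      calc φ (|T g|) ≤ |φ (|T g|)| := le_abs_self _
        _ ≤ ‖φ‖ * ‖(|T g|)‖ := by rw [← Real.norm_eq_abs]; exact φ.le_opNorm _
        _ = ‖φ‖ * ‖T g‖ := by rw [norm_abs_eq_norm]
    have h3 := hint |g| habs_nonneg
    rw [MeasureTheory.Lp.norm_def, eLpNorm_congr_ae (ContinuousMap.coeFn_toLp μ g), h1]
    apply ENNReal.toReal_le_of_le_ofReal (mul_nonneg (norm_nonneg φ) (norm_nonneg _))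
    exact h3.trans (ENNReal.ofReal_le_ofReal h2)
  -- the range of T as a submodule, and the factorized map
  set R : Submodule ℝ E := LinearMap.range T with hR
  set e : C(K, ℝ) ≃ₗ[ℝ] R := LinearEquiv.ofInjective T hinj with he
  have he_coe : ∀ f : C(K, ℝ), ((e f : E)) = T f := fun f => LinearEquiv.ofInjective_apply T f
  set S₀ : R →ₗ[ℝ] Lp ℝ 1 μ :=
    ((ContinuousMap.toLp 1 μ ℝ : C(K, ℝ) →L[ℝ] Lp ℝ 1 μ) :
      C(K, ℝ) →ₗ[ℝ] Lp ℝ 1 μ).comp e.symm.toLinearMap with hS₀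
  have hS₀_apply : ∀ y : R, S₀ y = (ContinuousMap.toLp 1 μ ℝ : C(K, ℝ) →L[ℝ] Lp ℝ 1 μ)
      (e.symm y) := fun y => rfl
  have hS₀_bound : ∀ y : R, ‖S₀ y‖ ≤ ‖φ‖ * ‖y‖ := by
    intro y
    rw [hS₀_apply]
    refine (hbound (e.symm y)).trans (le_of_eq ?_)
    congr 1
    have h4 : ((e (e.symm y) : E)) = (y : E) := by rw [e.apply_symm_apply]
    rw [he_coe] at h4
    rw [h4]
    rfl
  set S : R →L[ℝ] Lp ℝ 1 μ := S₀.mkContinuous (‖φ‖) hS₀_bound with hS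
  have hS_apply : ∀ y : R, S y = S₀ y := fun y => rfl
  -- the range of toLp equals the range of S
  have hrange_eq : Set.range ((ContinuousMap.toLp 1 μ ℝ : C(K, ℝ) →L[ℝ] Lp ℝ 1 μ))
      = Set.range S := by
    ext z
    constructor
    · rintro ⟨f, rfl⟩
      exact ⟨e f, by rw [hS_apply, hS₀_apply, e.symm_apply_apply]⟩
    · rintro ⟨y, rfl⟩
      exact ⟨e.symm y, by rw [hS_apply, hS₀_apply]⟩
  -- separability of L¹
  haveI : SecondCountableTopology E := UniformSpace.secondCountable_of_separable E
  have hdense : DenseRange ((ContinuousMap.toLp 1 μ ℝ : C(K, ℝ) →L[ℝ] Lp ℝ 1 μ)) :=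
    ContinuousMap.toLp_denseRange (𝕜 := ℝ) (E := ℝ) (μ := μ) (p := 1) ENNReal.one_ne_top
  have hsepLp : TopologicalSpace.SeparableSpace (Lp ℝ 1 μ) := by
    rw [← TopologicalSpace.isSeparable_univ_iff]
    have h5 : TopologicalSpace.IsSeparable (Set.range S) := TopologicalSpace.isSeparable_range S.continuous
    have h6 : TopologicalSpace.IsSeparable (Set.range ((ContinuousMap.toLp 1 μ ℝ :
        C(K, ℝ) →L[ℝ] Lp ℝ 1 μ))) := hrange_eq ▸ h5
    have h7 := h6.closure
    rwa [hdense.closure_eq] at h7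
  -- the extension of S to a map defined on all of E
  set w : E → Lp ℝ 1 μ := fun y => if hy : y ∈ R then S ⟨y, hy⟩ else 0 with hw
  have hw_mem : ∀ (y : E) (hy : y ∈ R), w y = S ⟨y, hy⟩ := fun y hy => dif_pos hy
  have hw_lip : ∀ y ∈ (R : Set E), ∀ z ∈ (R : Set E), ‖w y - w z‖ ≤ ‖φ‖ * ‖y - z‖ := by
    intro y hy z hz
    rw [hw_mem y hy, hw_mem z hz, ← map_sub]
    have h8 : (⟨y, hy⟩ - ⟨z, hz⟩ : R) = ⟨y - z, sub_mem hy hz⟩ := rfl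
    rw [h8, hS_apply]
    exact hS₀_bound _
  have hcontOn : ContinuousOn w (R : Set E) := by
    apply LipschitzOnWith.continuousOn (K := Real.toNNReal ‖φ‖)
    apply LipschitzOnWith.of_dist_le_mul
    intro y hy z hz
    rw [dist_eq_norm, dist_eq_norm, Real.coe_toNNReal _ (norm_nonneg φ)]
    exact hw_lip y hy z hz
  -- the sets Cₘ
  set Cs : ℕ → Set E := fun m => {y : E | |y| ≤ ((m : ℝ) + 1) • u} with hCs
  have habs_cont : Continuous fun y : E => |y| := by
    have h9 : (fun y : E => |y|) = fun y : E => y ⊔ (-y) := rfl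
    rw [h9]
    exact continuous_id.sup continuous_neg
  have hCs_closed : ∀ m, IsClosed (Cs m) := by
    intro m
    have : Cs m = (fun y : E => |y|) ⁻¹' (Iic (((m : ℝ) + 1) • u)) := rfl
    rw [this]
    exact IsClosed.preimage habs_cont isClosed_Iic
  have hCs_sub : ∀ m, Cs m ⊆ (R : Set E) := by
    intro m y hy
    have h10 : y ∈ Set.range ⇑T := by
      rw [hrange]
      exact ⟨(m : ℝ) + 1, by positivity, hy⟩
    rwa [hR, LinearMap.coe_range]
  -- covering the range
  have hw_T : ∀ f : C(K, ℝ), w (T f) = (ContinuousMap.toLp 1 μ ℝ : C(K, ℝ) →L[ℝ] Lp ℝ 1 μ) f := by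
    intro f
    have hmem : T f ∈ R := LinearMap.mem_range_self T f
    rw [hw_mem (T f) hmem, hS_apply, hS₀_apply]
    have h11 : (⟨T f, hmem⟩ : R) = e f := Subtype.ext (he_coe f).symm
    rw [h11, e.symm_apply_apply]
  have hcover : Set.range ((ContinuousMap.toLp 1 μ ℝ : C(K, ℝ) →L[ℝ] Lp ℝ 1 μ))
      = ⋃ m : ℕ, w '' Cs m := by
    ext z
    constructor
    · rintro ⟨f, rfl⟩
      have h12 : T f ∈ Set.range ⇑T := ⟨f, rfl⟩
      rw [hrange] at h12
      obtain ⟨r, hr, hru⟩ := h12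
      refine Set.mem_iUnion.mpr ⟨⌈r⌉₊, T f, ?_, hw_T f⟩
      have h13 : r ≤ (⌈r⌉₊ : ℝ) + 1 := (Nat.le_ceil r).trans (by linarith)
      have h14 : r • u ≤ ((⌈r⌉₊ : ℝ) + 1) • u := by
        have h16 := smul_nonneg (sub_nonneg.mpr h13) hu
        have h15 : ((⌈r⌉₊ : ℝ) + 1) • u - r • u = (((⌈r⌉₊ : ℝ) + 1) - r) • u := by
          rw [sub_smul]
        rw [← h15] at h16
        exact sub_nonneg.mp h16
      exact hru.trans h14
    · rintro ⟨s, ⟨m, rfl⟩, y, hy, rfl⟩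
      have hyR : y ∈ R := hCs_sub m hy
      rw [hw_mem y hyR, hS_apply, hS₀_apply]
      exact ⟨e.symm ⟨y, hyR⟩, rfl⟩
  have hanalytic : MeasureTheory.AnalyticSet
      (Set.range ((ContinuousMap.toLp 1 μ ℝ : C(K, ℝ) →L[ℝ] Lp ℝ 1 μ))) := by
    rw [hcover]
    apply MeasureTheory.AnalyticSet.iUnion
    intro m
    exact ((hCs_closed m).analyticSet).image_of_continuousOn (hcontOn.mono (hCs_sub m))
  exact ⟨μ, hfin, hreg, hpos, hsepLp, hanalytic⟩
end

section
/- Let K be a sick compactum and let (x_n)_{n∈ℕ} be an injective enumeration of a dense set of isolated points of K. Then the family ℬ = { {n ∈ ℕ : x_n ∈ U} : U a clopen subset of K }, viewed as a subset of the Cantor space {0,1}^ℕ via indicator functions, is an analytic set. (Equivalently: if ℬ is a Boolean subalgebra of 𝒫(ℕ) containing all finite sets whose Stone space is a sick compactum, then ℬ is an analytic subset of 𝒫(ℕ).) -/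
open MeasureTheory Topology Filter Set

/-- If `(x n)` is an injective enumeration of a dense set of isolated points of a sick
compactum `K`, then the traces on `{x n : n}` of the clopen subsets of `K`, viewed as a
subset of the Cantor space `{0,1}^ℕ` via indicator functions, form an analytic set. -/
theorem stmt_5 (K : Type) [TopologicalSpace K] [CompactSpace K] [T2Space K]
    (hK : IsSick K) (x : ℕ → K) (hinj : Function.Injective x)
    (hiso : ∀ n, IsOpen ({x n} : Set K)) (hdense : Dense (Set.range x)) :
    MeasureTheory.AnalyticSet
      {b : ℕ → Bool | ∃ U : Set K, IsClopen U ∧ ∀ n, (b n = true ↔ x n ∈ U)} := by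
  classical
  obtain ⟨E, _, _, _, _, _, _, _, _, _, u, T, hu, hTinj, hTsup, hT1, hTrange⟩ := hK
  -- T preserves infima
  have hTinf : ∀ f g : C(K, ℝ), T (f ⊓ g) = T f ⊓ T g := by
    intro f g
    have h2 : T (f ⊓ g) + T (f ⊔ g) = T f + T g := by
      rw [← map_add, inf_add_sup, map_add]
    have h3 : T (f ⊓ g) + (T f ⊔ T g) = T f ⊓ T g + (T f ⊔ T g) := by
      rw [inf_add_sup, ← hTsup, h2]
    exact add_right_cancel h3
  -- continuity of real indicators of clopen sets
  have hcont : ∀ U : Set K, IsClopen U → Continuous (fun k => if k ∈ U then (1 : ℝ) else 0) := by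
    intro U hU
    have h : (fun k => if k ∈ U then (1 : ℝ) else 0) =
        (fun b : Bool => if b then (1 : ℝ) else 0) ∘ U.boolIndicator := by
      funext k; by_cases h : k ∈ U <;> simp [Set.boolIndicator, h]
    rw [h]
    exact continuous_of_discreteTopology.comp
      ((continuous_boolIndicator_iff_isClopen U).2 hU)
  have hclo : ∀ n, IsClopen ({x n} : Set K) := fun n => ⟨isClosed_singleton, hiso n⟩
  -- the continuous indicator of {x n}
  set χ : ℕ → C(K, ℝ) := fun n => ⟨fun k => if k ∈ ({x n} : Set K) then 1 else 0,
    hcont _ (hclo n)⟩ with hχ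
  have hχapp : ∀ n k, χ n k = if k = x n then 1 else 0 := by
    intro n k; simp [hχ]
  have hχne : ∀ n, T (χ n) ≠ 0 := by
    intro n h
    have : χ n = 0 := hTinj (by simpa using h)
    have := DFunLike.congr_fun this (x n)
    rw [hχapp] at this
    simp at this
  -- the closed set whose projection is the target
  set S : Set ((ℕ → Bool) × E) :=
    {p | p.2 ⊓ (u - p.2) = 0 ∧ ∀ n, (p.1 n = true → p.2 ⊓ T (χ n) = T (χ n)) ∧
      (p.1 n = false → p.2 ⊓ T (χ n) = 0)} with hS
  have hSclosed : IsClosed S := by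
    have : S = {p : (ℕ → Bool) × E | p.2 ⊓ (u - p.2) = 0} ∩
        ⋂ n, ({p : (ℕ → Bool) × E | p.1 n = true} ∩ {p | p.2 ⊓ T (χ n) = T (χ n)} ∪
          {p : (ℕ → Bool) × E | p.1 n = false} ∩ {p | p.2 ⊓ T (χ n) = 0}) := by
      ext ⟨b, y⟩
      simp only [hS, Set.mem_setOf_eq, Set.mem_inter_iff, Set.mem_iInter, Set.mem_union]
      refine and_congr Iff.rfl (forall_congr' fun n => ?_)
      cases h : b n <;> simp [h]
    rw [this]
    have hc1 : Continuous fun p : (ℕ → Bool) × E => p.2 ⊓ (u - p.2) :=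
      continuous_snd.inf (continuous_const.sub continuous_snd)
    refine IsClosed.inter (isClosed_eq hc1 continuous_const) (isClosed_iInter fun n => ?_)
    have hcb : Continuous fun p : (ℕ → Bool) × E => p.1 n :=
      (continuous_apply n).comp continuous_fst
    have hci : Continuous fun p : (ℕ → Bool) × E => p.2 ⊓ T (χ n) :=
      continuous_snd.inf continuous_const
    exact ((isClosed_eq hcb continuous_const).inter
        (isClosed_eq hci continuous_const)).union
      ((isClosed_eq hcb continuous_const).inter (isClosed_eq hci continuous_const))
  -- Polishness
  haveI : SecondCountableTopology E := UniformSpace.secondCountable_of_separable E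
  haveI : PolishSpace E := inferInstance
  haveI : TopologicalSpace.IsCompletelyMetrizableSpace (ℕ → Bool) :=
    TopologicalSpace.IsCompletelyMetrizableSpace.pi_countable
  have hA : AnalyticSet (Prod.fst '' S) :=
    hSclosed.analyticSet.image_of_continuous continuous_fst
  convert hA using 1
  ext b
  constructor
  · -- from a clopen set to a witness in S
    rintro ⟨U, hUc, hbU⟩
    set f : C(K, ℝ) := ⟨fun k => if k ∈ U then 1 else 0, hcont U hUc⟩ with hf
    refine ⟨(b, T f), ⟨?_, fun n => ⟨fun hb => ?_, fun hb => ?_⟩⟩, rfl⟩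
    · have h0 : f ⊓ (1 - f) = 0 := by
        ext k
        simp only [ContinuousMap.inf_apply, ContinuousMap.sub_apply, ContinuousMap.one_apply,
          ContinuousMap.zero_apply, hf, ContinuousMap.coe_mk]
        by_cases h : k ∈ U <;> simp [h]
      show T f ⊓ (u - T f) = 0
      calc T f ⊓ (u - T f) = T (f ⊓ (1 - f)) := by rw [hTinf, map_sub, hT1]
        _ = 0 := by rw [h0, map_zero]
    · have hxU : x n ∈ U := (hbU n).1 hb
      have h1 : f ⊓ χ n = χ n := by
        ext k
        simp only [ContinuousMap.inf_apply, hf, ContinuousMap.coe_mk]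
        rw [hχapp]
        by_cases h : k = x n
        · subst h; simp [hxU]
        · simp only [h, if_false]
          by_cases h2 : k ∈ U <;> simp [h2]
      show T f ⊓ T (χ n) = T (χ n)
      rw [← hTinf, h1]
    · have hxU : x n ∉ U := fun h => by simp [(hbU n).2 h] at hb
      have h1 : f ⊓ χ n = 0 := by
        ext k
        simp only [ContinuousMap.inf_apply, hf, ContinuousMap.coe_mk, ContinuousMap.zero_apply]
        rw [hχapp]
        by_cases h : k = x n
        · subst h; simp [hxU]
        · simp only [h, if_false]
          by_cases h2 : k ∈ U <;> simp [h2]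
      show T f ⊓ T (χ n) = 0
      rw [← hTinf, h1, map_zero]
  · -- from a witness in S to a clopen set
    rintro ⟨⟨b', y⟩, ⟨hy0, hyn⟩, rfl⟩
    have hy : 0 ≤ y := hy0 ▸ inf_le_left
    have hyu : y ≤ u := sub_nonneg.1 (hy0 ▸ inf_le_right)
    have hyr : y ∈ Set.range T := by
      rw [hTrange]
      exact ⟨1, one_pos, by rw [abs_of_nonneg hy, one_smul]; exact hyu⟩
    obtain ⟨f, hf⟩ := hyr
    have hidem : f ⊓ (1 - f) = 0 := by
      apply hTinj
      rw [hTinf, map_sub, hT1, map_zero, hf]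
      exact hy0
    have hdich : ∀ k, f k = 0 ∨ f k = 1 := by
      intro k
      have h := DFunLike.congr_fun hidem k
      simp only [ContinuousMap.inf_apply, ContinuousMap.sub_apply, ContinuousMap.one_apply,
        ContinuousMap.zero_apply] at h
      rcases le_total (f k) (1 - f k) with hc | hc
      · left; rwa [min_eq_left hc] at h
      · right; rw [min_eq_right hc] at h; linarith
    refine ⟨f ⁻¹' {1}, ⟨isClosed_singleton.preimage f.continuous, ?_⟩, fun n => ?_⟩
    · have heq : f ⁻¹' {1} = f ⁻¹' (Set.Ioi (1/2 : ℝ)) := by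
        ext k
        simp only [Set.mem_preimage, Set.mem_singleton_iff, Set.mem_Ioi]
        rcases hdich k with h | h <;> rw [h] <;> norm_num
      rw [heq]
      exact isOpen_Ioi.preimage f.continuous
    · have hkey1 : f (x n) = 1 → y ⊓ T (χ n) = T (χ n) := by
        intro h1
        have h2 : f ⊓ χ n = χ n := by
          ext k
          simp only [ContinuousMap.inf_apply]
          rw [hχapp]
          by_cases h : k = x n
          · subst h; simp [hχapp, h1]
          · simp only [h, if_false]
            rcases hdich k with h3 | h3 <;> rw [h3] <;> norm_num
        rw [← hf, ← hTinf, h2]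
      have hkey0 : f (x n) = 0 → y ⊓ T (χ n) = 0 := by
        intro h1
        have h2 : f ⊓ χ n = 0 := by
          ext k
          simp only [ContinuousMap.inf_apply, ContinuousMap.zero_apply]
          rw [hχapp]
          by_cases h : k = x n
          · subst h; simp [h1]
          · simp only [h, if_false]
            rcases hdich k with h3 | h3 <;> rw [h3] <;> norm_num
        rw [← hf, ← hTinf, h2, map_zero]
      constructor
      · intro hb
        have hT := (hyn n).1 hb
        rcases hdich (x n) with h | h
        · exact absurd (((hkey0 h).symm.trans hT).symm) (hχne n)
        · simpa using h
      · intro hmem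
        simp only [Set.mem_preimage, Set.mem_singleton_iff] at hmem
        by_contra hb
        have hbf : b' n = false := by
          cases h : b' n
          · rfl
          · exact absurd h hb
        have hT := (hyn n).2 hbf
        rw [hkey1 hmem] at hT
        exact hχne n hT
end

section
/- Let K be a compact Hausdorff space, E a separable Banach lattice, x ∈ E with x ≥ 0, and T : C(K,ℝ) → E an injective linear map preserving lattice operations whose range equals the principal ideal E_x = {y ∈ E : |y| ≤ r•x for some r > 0}. Then for every σ-generated closed set L ⊆ K and every real r ≥ 0, the set { Tf : f ∈ C(K,ℝ) and |f(t)| ≤ r for all t ∈ L } is an analytic subset of E. -/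
open MeasureTheory Topology Filter Set

/-- A closed subset `L` of `K` is *σ-generated* if it belongs to every family of closed subsets
of `K` containing all closed `Gδ` sets and stable under countable intersections and under
closures of countable unions. -/
def SigmaGeneratedClosed (K : Type*) [TopologicalSpace K] (L : Set K) : Prop :=
  ∀ 𝔉 : Set (Set K), (∀ C ∈ 𝔉, IsClosed C) →
    (∀ C : Set K, IsClosed C → IsGδ C → C ∈ 𝔉) →
    (∀ s : ℕ → Set K, (∀ n, s n ∈ 𝔉) → (⋂ n, s n) ∈ 𝔉) →
    (∀ s : ℕ → Set K, (∀ n, s n ∈ 𝔉) → closure (⋃ n, s n) ∈ 𝔉) →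
    L ∈ 𝔉

open ContinuousMap Pointwise
set_option linter.unusedSectionVars false

section Aux

variable {K : Type} [TopologicalSpace K] [CompactSpace K] [T2Space K]
variable {E : Type} [NormedAddCommGroup E] [Lattice E] [IsOrderedAddMonoid E] [HasSolidNorm E]
  [NormedSpace ℝ E] [PosSMulStrictMono ℝ E] [PosSMulReflectLT ℝ E]
  [CompleteSpace E] [TopologicalSpace.SeparableSpace E]

namespace Stmt6Aux

/-- Elements of `E` of the form `T f` with `f` vanishing on `C`. -/
def NT (T : C(K, ℝ) →ₗ[ℝ] E) (C : Set K) : Set E :=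
  {y | ∃ f : C(K, ℝ), y = T f ∧ ∀ t ∈ C, f t = 0}

variable {T : C(K, ℝ) →ₗ[ℝ] E}

lemma Tmono (hlat : ∀ f g : C(K, ℝ), T (f ⊔ g) = T f ⊔ T g) {f g : C(K, ℝ)} (h : f ≤ g) :
    T f ≤ T g := by
  have h1 : T f ⊔ T g = T g := by rw [← hlat, sup_eq_right.mpr h]
  exact h1 ▸ le_sup_left

lemma Trefl (hinj : Function.Injective T)
    (hlat : ∀ f g : C(K, ℝ), T (f ⊔ g) = T f ⊔ T g) {f g : C(K, ℝ)}
    (h : T f ≤ T g) : f ≤ g := by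
  have h1 : T (f ⊔ g) = T g := by rw [hlat, sup_eq_right.mpr h]
  exact sup_eq_right.mp (hinj h1)

lemma Tabs (hlat : ∀ f g : C(K, ℝ), T (f ⊔ g) = T f ⊔ T g) (f : C(K, ℝ)) :
    |T f| = T |f| := by
  have h1 : |f| = f ⊔ (-f) := rfl
  have h2 : |T f| = T f ⊔ (-(T f)) := rfl
  rw [h1, h2, hlat, map_neg]

lemma Tinf (hlat : ∀ f g : C(K, ℝ), T (f ⊔ g) = T f ⊔ T g) (f g : C(K, ℝ)) :
    T (f ⊓ g) = T f ⊓ T g := by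
  have h1 : f ⊓ g = -((-f) ⊔ (-g)) := by rw [neg_sup, neg_neg, neg_neg]
  rw [h1, map_neg, hlat, map_neg, map_neg, neg_sup, neg_neg, neg_neg]

lemma TabsLe (hinj : Function.Injective T)
    (hlat : ∀ f g : C(K, ℝ), T (f ⊔ g) = T f ⊔ T g) {f g : C(K, ℝ)}
    (h : |T f| ≤ T g) : ∀ t, |f t| ≤ g t := by
  rw [Tabs hlat] at h
  have := Trefl hinj hlat h
  intro t
  simpa using ContinuousMap.le_def.mp this t

lemma TabsLe' (hlat : ∀ f g : C(K, ℝ), T (f ⊔ g) = T f ⊔ T g) {f g : C(K, ℝ)}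
    (h : ∀ t, |f t| ≤ g t) : |T f| ≤ T g := by
  rw [Tabs hlat]
  exact Tmono hlat (ContinuousMap.le_def.mpr (by simpa using h))

lemma analytic_inter {α : Type*} [TopologicalSpace α] [T2Space α] {s t : Set α}
    (hs : AnalyticSet s) (ht : AnalyticSet t) : AnalyticSet (s ∩ t) := by
  rw [Set.inter_eq_iInter]
  exact AnalyticSet.iInter fun b => by cases b <;> simpa

lemma isClosed_absBall (z : E) : IsClosed {y : E | |y| ≤ z} := by
  have h1 : Continuous fun y : E => |y| := by
    have : (fun y : E => |y|) = fun y : E => y ⊔ (-y) := rfl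
    rw [this]; exact continuous_id.sup continuous_neg
  exact isClosed_le h1 continuous_const

lemma analytic_add {s t : Set E} (hs : AnalyticSet s) (ht : AnalyticSet t) :
    AnalyticSet (s + t) := by
  have h1 : s + t = (fun p : E × E => p.1 + p.2) ''
      ((Prod.fst ⁻¹' s) ∩ (Prod.snd ⁻¹' t)) := by
    ext y
    constructor
    · rintro ⟨a, ha, b, hb, rfl⟩
      exact ⟨(a, b), ⟨ha, hb⟩, rfl⟩
    · rintro ⟨⟨a, b⟩, ⟨ha, hb⟩, rfl⟩
      exact ⟨a, ha, b, hb, rfl⟩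
  rw [h1]
  exact (analytic_inter (hs.preimage continuous_fst) (ht.preimage continuous_snd)).image_of_continuous
    continuous_add

lemma analytic_range {x : E} (hx : 0 ≤ x)
    (hrange : Set.range T = {y : E | ∃ r : ℝ, 0 < r ∧ |y| ≤ r • x}) :
    AnalyticSet (Set.range T) := by
  have h1 : Set.range T = ⋃ n : ℕ, {y : E | |y| ≤ ((n : ℝ) + 1) • x} := by
    rw [hrange]; ext y
    simp only [mem_setOf_eq, mem_iUnion]
    constructor
    · rintro ⟨r, hr, hle⟩
      refine ⟨⌈r⌉₊, hle.trans ?_⟩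
      have h2 : r ≤ (⌈r⌉₊ : ℝ) + 1 := (Nat.le_ceil r).trans (by linarith)
      have h3 := smul_nonneg (sub_nonneg.mpr h2) hx
      rw [sub_smul] at h3
      exact sub_nonneg.mp h3
    · rintro ⟨n, hn⟩
      exact ⟨(n : ℝ) + 1, by positivity, hn⟩
  rw [h1]
  exact AnalyticSet.iUnion fun n => (isClosed_absBall _).analyticSet

lemma analytic_NT_zeroset (hinj : Function.Injective T)
    (hlat : ∀ f g : C(K, ℝ), T (f ⊔ g) = T f ⊔ T g) {x : E} (hx : 0 ≤ x)
    (hrange : Set.range T = {y : E | ∃ r : ℝ, 0 < r ∧ |y| ≤ r • x})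
    (φ : C(K, ℝ)) : AnalyticSet (NT T (φ ⁻¹' {0})) := by
  have hEq : NT T (φ ⁻¹' {0}) = ⋂ k : ℕ, ⋃ n : ℕ,
      (Set.range T ∩ {y : E | |y| ≤ T ((1 / ((k : ℝ) + 1)) • 1 + (n : ℝ) • |φ|)}) := by
    ext y
    constructor
    · rintro ⟨f, rfl, hf⟩
      refine mem_iInter.mpr fun k => ?_
      set ε : ℝ := 1 / ((k : ℝ) + 1) with hεdef
      have hε : 0 < ε := by positivity
      have key : ∃ n : ℕ, ∀ t, |f t| ≤ ε + (n : ℝ) * |φ t| := by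
        set F : Set K := {t | ε ≤ |f t|} with hFdef
        have hFc : IsClosed F := isClosed_le continuous_const (map_continuous f).abs
        rcases eq_empty_or_nonempty F with hF | hF
        · refine ⟨0, fun t => ?_⟩
          have ht : t ∉ F := by rw [hF]; exact notMem_empty t
          have : ¬ ε ≤ |f t| := ht
          have h2 : (0 : ℝ) ≤ |φ t| := abs_nonneg _
          push_neg at this
          simpa using by nlinarith
        · obtain ⟨t0, ht0F, hmin⟩ := hFc.isCompact.exists_isMinOn hF
            ((map_continuous φ).abs.continuousOn)
          have hm : 0 < |φ t0| := by
            rcases eq_or_ne (φ t0) 0 with h | h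
            · exfalso
              have := hf t0 (by simpa using h)
              have h2 : ε ≤ |f t0| := ht0F
              rw [this] at h2
              simp at h2
              linarith
            · exact abs_pos.mpr h
          refine ⟨⌈‖f‖ / |φ t0|⌉₊, fun t => ?_⟩
          by_cases htF : t ∈ F
          · have h1 : |φ t0| ≤ |φ t| := hmin htF
            have h2 : ‖f‖ / |φ t0| ≤ (⌈‖f‖ / |φ t0|⌉₊ : ℝ) := Nat.le_ceil _
            have h3 : |f t| ≤ ‖f‖ := by
              rw [← Real.norm_eq_abs]; exact f.norm_coe_le_norm t
            rw [div_le_iff₀ hm] at h2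
            have h4 : (0 : ℝ) ≤ (⌈‖f‖ / |φ t0|⌉₊ : ℝ) := Nat.cast_nonneg _
            nlinarith
          · have : ¬ ε ≤ |f t| := htF
            push_neg at this
            have h2 : (0 : ℝ) ≤ ((⌈‖f‖ / |φ t0|⌉₊ : ℕ) : ℝ) * |φ t| := by positivity
            linarith
      obtain ⟨n, hn⟩ := key
      refine mem_iUnion.mpr ⟨n, ⟨⟨f, rfl⟩, ?_⟩⟩
      refine TabsLe' hlat fun t => ?_
      simpa [hεdef] using hn t
    · intro hy
      have hyr : y ∈ Set.range T := by
        obtain ⟨n, hn⟩ := mem_iUnion.mp (mem_iInter.mp hy 0)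
        exact hn.1
      obtain ⟨f, rfl⟩ := hyr
      refine ⟨f, rfl, fun t ht => ?_⟩
      have htφ : φ t = 0 := by simpa using ht
      have key : ∀ k : ℕ, |f t| ≤ 1 / ((k : ℝ) + 1) := by
        intro k
        obtain ⟨n, hn⟩ := mem_iUnion.mp (mem_iInter.mp hy k)
        have h2 := TabsLe hinj hlat hn.2 t
        simpa [htφ] using h2
      have h3 : |f t| ≤ 0 := by
        by_contra h
        push_neg at h
        obtain ⟨k, hk⟩ := exists_nat_one_div_lt h
        exact absurd (key k) (by linarith)
      exact abs_eq_zero.mp (le_antisymm h3 (abs_nonneg _))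
  rw [hEq]
  exact AnalyticSet.iInter fun k => AnalyticSet.iUnion fun n =>
    analytic_inter (analytic_range hx hrange) (isClosed_absBall _).analyticSet


lemma bin (A B : Set K) (hA : IsClosed A) (hB : IsClosed B) (f : C(K, ℝ)) (δ : ℝ) (hδ : 0 < δ)
    (h : ∀ t, t ∈ A → t ∈ B → |f t| ≤ δ) :
    ∃ a b : C(K, ℝ), (∀ t ∈ A, a t = 0) ∧ (∀ t ∈ B, b t = 0) ∧
      ∀ t, |f t - a t - b t| ≤ 2 * δ := by
  set c : C(K, ℝ) := (f ⊓ (2 * δ) • 1) ⊔ (-((2 * δ) • 1)) with hcdef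
  have hc_apply : ∀ t, c t = (f t ⊓ (2 * δ)) ⊔ (-(2 * δ)) := fun t => by
    simp [hcdef]
  have hc_bound : ∀ t, |c t| ≤ 2 * δ := fun t => by
    rw [hc_apply, abs_le]
    constructor
    · exact le_sup_right
    · exact sup_le inf_le_right (by linarith)
  have hc_eq : ∀ t, |f t| ≤ 2 * δ → c t = f t := fun t ht => by
    rw [abs_le] at ht
    rw [hc_apply, inf_eq_left.mpr ht.2, sup_eq_left.mpr ht.1]
  set t' : C(K, ℝ) := f - c with ht'def
  have ht'0 : ∀ s, |f s| ≤ 2 * δ → t' s = 0 := fun s hs => by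
    simp [ht'def, hc_eq s hs]
  set A' : Set K := A ∩ {s | 2 * δ ≤ |f s|} with hA'def
  set B' : Set K := B ∩ {s | 2 * δ ≤ |f s|} with hB'def
  have hclosed : IsClosed {s : K | 2 * δ ≤ |f s|} :=
    isClosed_le continuous_const (map_continuous f).abs
  have hdisj : Disjoint A' B' := by
    rw [Set.disjoint_left]
    rintro s ⟨hsA, hs2⟩ ⟨hsB, _⟩
    have := h s hsA hsB
    have h2 : (2 : ℝ) * δ ≤ |f s| := hs2
    linarith
  obtain ⟨ψ, hψ0, hψ1, hψb⟩ :=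
    exists_continuous_zero_one_of_isClosed (hA.inter hclosed) (hB.inter hclosed) hdisj
  refine ⟨ψ * t', (1 - ψ) * t', ?_, ?_, ?_⟩
  · intro s hs
    by_cases h2 : |f s| ≤ 2 * δ
    · simp [ContinuousMap.mul_apply, ht'0 s h2]
    · push_neg at h2
      have hsA' : s ∈ A' := ⟨hs, le_of_lt h2⟩
      have := hψ0 hsA'
      simp only [ContinuousMap.mul_apply]
      simp_all
  · intro s hs
    by_cases h2 : |f s| ≤ 2 * δ
    · simp [ContinuousMap.mul_apply, ht'0 s h2]
    · push_neg at h2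
      have hsB' : s ∈ B' := ⟨hs, le_of_lt h2⟩
      have := hψ1 hsB'
      simp only [ContinuousMap.mul_apply, ContinuousMap.sub_apply, ContinuousMap.one_apply]
      simp_all
  · intro s
    have heq : f s - (ψ * t') s - ((1 - ψ) * t') s = c s := by
      simp only [ContinuousMap.mul_apply, ContinuousMap.sub_apply, ContinuousMap.one_apply,
        ht'def]
      ring
    rw [heq]
    exact hc_bound s

lemma findec : ∀ (m : ℕ) (C : ℕ → Set K), (∀ i, IsClosed (C i)) → ∀ (f : C(K, ℝ)) (δ : ℝ),
    0 < δ → (∀ t, (∀ i, i ≤ m → t ∈ C i) → |f t| ≤ δ) →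
    ∃ g : ℕ → C(K, ℝ), (∀ i, i ≤ m → ∀ t ∈ C i, g i t = 0) ∧
      ∀ t, |f t - ∑ i ∈ Finset.range (m + 1), g i t| ≤ 3 * δ := by
  intro m
  induction m with
  | zero =>
    intro C hC f δ hδ h
    set c : C(K, ℝ) := (f ⊓ δ • 1) ⊔ (-(δ • 1)) with hcdef
    have hc_apply : ∀ t, c t = (f t ⊓ δ) ⊔ (-δ) := fun t => by simp [hcdef]
    refine ⟨fun _ => f - c, fun i hi t ht => ?_, fun t => ?_⟩
    · have hi0 : i = 0 := Nat.le_zero.mp hi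
      subst hi0
      have hft : |f t| ≤ δ := h t (by
        intro j hj
        have hj0 : j = 0 := Nat.le_zero.mp hj
        subst hj0
        exact ht)
      rw [abs_le] at hft
      simp [hc_apply, inf_eq_left.mpr hft.2, sup_eq_left.mpr hft.1]
    · simp only [zero_add, Finset.sum_range_one, ContinuousMap.sub_apply]
      have : f t - (f t - c t) = c t := by ring
      rw [this, hc_apply, abs_le]
      have h1 : -δ ≤ (f t ⊓ δ) ⊔ -δ := le_sup_right
      have h2 : (f t ⊓ δ) ⊔ -δ ≤ δ := sup_le inf_le_right (by linarith)
      constructor <;> linarith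
  | succ m ih =>
    intro C hC f δ hδ h
    set B : Set K := ⋂ (i : ℕ) (_ : i ≤ m), C (i + 1) with hBdef
    have hBc : IsClosed B := isClosed_iInter fun i => isClosed_iInter fun _ => hC _
    obtain ⟨a, b, ha, hb, hab⟩ := bin (C 0) B (hC 0) hBc f δ hδ (by
      intro t ht0 htB
      refine h t fun i hi => ?_
      match i with
      | 0 => exact ht0
      | (j + 1) =>
        have hj : j ≤ m := Nat.lt_succ_iff.mp hi
        exact mem_iInter.mp (mem_iInter.mp htB j) hj)
    obtain ⟨g', hg', hg'b⟩ := ih (fun i => C (i + 1)) (fun i => hC (i + 1)) b (δ / 3)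
      (by positivity) (by
        intro t ht
        have htB : t ∈ B := mem_iInter.mpr fun i => mem_iInter.mpr fun hi => ht i hi
        rw [hb t htB]
        simp
        positivity)
    refine ⟨fun i => match i with | 0 => a | (j + 1) => g' j, ?_, ?_⟩
    · intro i hi t ht
      match i with
      | 0 => exact ha t ht
      | (j + 1) => exact hg' j (Nat.lt_succ_iff.mp hi) t ht
    · intro t
      rw [Finset.sum_range_succ']
      have h1 := hab t
      have h2 := hg'b t
      have : f t - (∑ i ∈ Finset.range (m + 1), g' i t + a t)
          = (f t - a t - b t) + (b t - ∑ i ∈ Finset.range (m + 1), g' i t) := by ring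
      calc |f t - (∑ i ∈ Finset.range (m + 1), g' i t + a t)|
          = |(f t - a t - b t) + (b t - ∑ i ∈ Finset.range (m + 1), g' i t)| := by rw [this]
        _ ≤ |f t - a t - b t| + |b t - ∑ i ∈ Finset.range (m + 1), g' i t| := abs_add_le _ _
        _ ≤ 2 * δ + 3 * (δ / 3) := add_le_add h1 h2
        _ = 3 * δ := by ring

def PSum (T : C(K, ℝ) →ₗ[ℝ] E) (C : ℕ → Set K) : ℕ → Set E
  | 0 => NT T (C 0)
  | (m + 1) => PSum T C m + NT T (C (m + 1))

lemma PSum_analytic {C : ℕ → Set K} (hA : ∀ n, AnalyticSet (NT T (C n))) :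
    ∀ m, AnalyticSet (PSum T C m) := by
  intro m
  induction m with
  | zero => exact hA 0
  | succ m ih => exact analytic_add ih (hA (m + 1))

lemma PSum_mem {C : ℕ → Set K} (f : ℕ → C(K, ℝ)) :
    ∀ m, (∀ i, i ≤ m → ∀ t ∈ C i, f i t = 0) →
      T (∑ i ∈ Finset.range (m + 1), f i) ∈ PSum T C m := by
  intro m
  induction m with
  | zero =>
    intro hf
    rw [Finset.sum_range_one]
    exact ⟨f 0, rfl, hf 0 le_rfl⟩
  | succ m ih =>
    intro hf
    rw [Finset.sum_range_succ, map_add]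
    exact Set.add_mem_add (ih fun i hi => hf i (hi.trans (Nat.le_succ m)))
      ⟨f (m + 1), rfl, hf (m + 1) le_rfl⟩

lemma PSum_sub {C : ℕ → Set K} : ∀ m, ∀ z ∈ PSum T C m,
    ∃ f : C(K, ℝ), z = T f ∧ ∀ t, (∀ i, i ≤ m → t ∈ C i) → f t = 0 := by
  intro m
  induction m with
  | zero =>
    rintro z ⟨f, rfl, hf⟩
    exact ⟨f, rfl, fun t ht => hf t (ht 0 le_rfl)⟩
  | succ m ih =>
    rintro z hz
    obtain ⟨z', hz', w, hw, rfl⟩ := Set.mem_add.mp hz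
    obtain ⟨g, rfl, hg⟩ := ih z' hz'
    obtain ⟨hh, rfl, hh0⟩ := hw
    refine ⟨g + hh, (map_add T g hh).symm, fun t ht => ?_⟩
    have h1 : g t = 0 := hg t fun i hi => ht i (hi.trans (Nat.le_succ m))
    have h2 : hh t = 0 := hh0 t (ht (m + 1) le_rfl)
    simp [h1, h2]

lemma analytic_NT_iInter (hinj : Function.Injective T)
    (hlat : ∀ f g : C(K, ℝ), T (f ⊔ g) = T f ⊔ T g) {x : E} (hx : 0 ≤ x)
    (hrange : Set.range T = {y : E | ∃ r : ℝ, 0 < r ∧ |y| ≤ r • x})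
    (C : ℕ → Set K) (hC : ∀ n, IsClosed (C n)) (hA : ∀ n, AnalyticSet (NT T (C n))) :
    AnalyticSet (NT T (⋂ n, C n)) := by
  have hEq : NT T (⋂ n, C n) = Set.range T ∩ ⋂ k : ℕ, ⋃ m : ℕ,
      (PSum T C m + {w : E | |w| ≤ T ((1 / ((k : ℝ) + 1)) • 1)}) := by
    ext y
    constructor
    · rintro ⟨f, rfl, hf⟩
      refine ⟨⟨f, rfl⟩, mem_iInter.mpr fun k => ?_⟩
      set δ : ℝ := 1 / (3 * ((k : ℝ) + 1)) with hδdef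
      have hδ : 0 < δ := by positivity
      set F : Set K := {t | δ ≤ |f t|} with hFdef
      have hFc : IsCompact F := (isClosed_le continuous_const (map_continuous f).abs).isCompact
      have hcov : F ⊆ ⋃ n, (C n)ᶜ := by
        intro t ht
        by_contra hc
        simp only [mem_iUnion, mem_compl_iff, not_exists, not_not] at hc
        have h1 := hf t (mem_iInter.mpr hc)
        have h2 : δ ≤ |f t| := ht
        rw [h1] at h2
        simp at h2
        linarith
      obtain ⟨s, hs⟩ := hFc.elim_finite_subcover (fun n => (C n)ᶜ)
        (fun n => (hC n).isOpen_compl) hcov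
      set m : ℕ := s.sup id with hmdef
      have hbound : ∀ t, (∀ i, i ≤ m → t ∈ C i) → |f t| ≤ δ := by
        intro t ht
        by_contra hgt
        push_neg at hgt
        have htF : t ∈ F := le_of_lt hgt
        obtain ⟨n, hns, hn⟩ := by
          have := hs htF
          simpa only [mem_iUnion, exists_prop] using this
        exact hn (ht n (Finset.le_sup (f := id) hns))
      obtain ⟨g, hg, hgb⟩ := findec m C hC f δ hδ hbound
      refine mem_iUnion.mpr ⟨m, ?_⟩
      have hsplit : T f = T (∑ i ∈ Finset.range (m + 1), g i)
          + T (f - ∑ i ∈ Finset.range (m + 1), g i) := by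
        rw [← map_add]
        congr 1
        abel
      rw [hsplit]
      refine Set.add_mem_add (PSum_mem g m hg) ?_
      show |T (f - ∑ i ∈ Finset.range (m + 1), g i)| ≤ T ((1 / ((k : ℝ) + 1)) • 1)
      refine TabsLe' hlat fun t => ?_
      have h1 := hgb t
      have h2 : (f - ∑ i ∈ Finset.range (m + 1), g i) t
          = f t - ∑ i ∈ Finset.range (m + 1), g i t := by
        simp
      rw [h2]
      have h3 : ((1 / ((k : ℝ) + 1)) • (1 : C(K, ℝ))) t = 1 / ((k : ℝ) + 1) := by simp
      rw [h3]
      have : 3 * δ = 1 / ((k : ℝ) + 1) := by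
        rw [hδdef]
        field_simp
      linarith
    · rintro ⟨⟨f, rfl⟩, hmem⟩
      refine ⟨f, rfl, fun t ht => ?_⟩
      have key : ∀ k : ℕ, |f t| ≤ 1 / ((k : ℝ) + 1) := by
        intro k
        obtain ⟨m, hm⟩ := mem_iUnion.mp (mem_iInter.mp hmem k)
        obtain ⟨z, hz, w, hw, hzw⟩ := Set.mem_add.mp hm
        obtain ⟨g, rfl, hg⟩ := PSum_sub m z hz
        have hwT : w = T (f - g) := by
          rw [map_sub]
          rw [← hzw]
          abel
        have hwb : |T (f - g)| ≤ T ((1 / ((k : ℝ) + 1)) • 1) := hwT ▸ hw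
        have h1 := TabsLe hinj hlat hwb t
        have hgt : g t = 0 := hg t fun i _ => mem_iInter.mp ht i
        simp only [ContinuousMap.sub_apply, hgt, sub_zero] at h1
        simpa using h1
      have h3 : |f t| ≤ 0 := by
        by_contra h
        push_neg at h
        obtain ⟨k, hk⟩ := exists_nat_one_div_lt h
        exact absurd (key k) (by linarith)
      exact abs_eq_zero.mp (le_antisymm h3 (abs_nonneg _))
  rw [hEq]
  exact analytic_inter (analytic_range hx hrange)
    (AnalyticSet.iInter fun k => AnalyticSet.iUnion fun m =>
      analytic_add (PSum_analytic hA m) (isClosed_absBall _).analyticSet)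

lemma NT_closure_iUnion (hinj : Function.Injective T) (s : ℕ → Set K) :
    NT T (closure (⋃ n, s n)) = ⋂ n, NT T (s n) := by
  ext y
  constructor
  · rintro ⟨f, rfl, hf⟩
    refine mem_iInter.mpr fun n => ⟨f, rfl, fun t ht => ?_⟩
    exact hf t (subset_closure (mem_iUnion.mpr ⟨n, ht⟩))
  · intro hy
    obtain ⟨f0, hf0, hf0z⟩ := mem_iInter.mp hy 0
    refine ⟨f0, hf0, fun t ht => ?_⟩
    have hz : ∀ n, ∀ t ∈ s n, f0 t = 0 := by
      intro n
      obtain ⟨fn, hfn, hfnz⟩ := mem_iInter.mp hy n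
      have : fn = f0 := hinj (hfn.symm.trans hf0)
      exact this ▸ hfnz
    have hcl : closure (⋃ n, s n) ⊆ {t | f0 t = 0} := by
      refine closure_minimal ?_ ?_
      · intro u hu
        obtain ⟨n, hn⟩ := mem_iUnion.mp hu
        exact hz n u hn
      · exact isClosed_eq (map_continuous f0) continuous_const
    exact hcl ht

lemma analytic_NT_gdelta (hinj : Function.Injective T)
    (hlat : ∀ f g : C(K, ℝ), T (f ⊔ g) = T f ⊔ T g) {x : E} (hx : 0 ≤ x)
    (hrange : Set.range T = {y : E | ∃ r : ℝ, 0 < r ∧ |y| ≤ r • x})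
    (C : Set K) (hCc : IsClosed C) (hCg : IsGδ C) : AnalyticSet (NT T C) := by
  obtain ⟨S, hSo, hSc, rfl⟩ := hCg
  rcases eq_empty_or_nonempty S with hS | hS
  · have huniv : ⋂₀ S = ((0 : C(K, ℝ)) ⁻¹' {0} : Set K) := by
      rw [hS, Set.sInter_empty]
      ext t
      simp
    rw [huniv]
    exact analytic_NT_zeroset hinj hlat hx hrange 0
  · obtain ⟨U, rfl⟩ := hSc.exists_eq_range hS
    rw [Set.sInter_range] at hCc ⊢
    have hUo : ∀ n, IsOpen (U n) := fun n => hSo (U n) (mem_range_self n)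
    have hurysohn : ∀ n : ℕ, ∃ φ : C(K, ℝ), Set.EqOn φ 0 (⋂ i, U i) ∧
        Set.EqOn φ 1 (U n)ᶜ ∧ ∀ t, φ t ∈ Set.Icc (0 : ℝ) 1 := by
      intro n
      refine exists_continuous_zero_one_of_isClosed hCc (hUo n).isClosed_compl ?_
      rw [Set.disjoint_left]
      intro t ht htc
      exact htc (mem_iInter.mp ht n)
    choose φ hφ0 hφ1 hφb using hurysohn
    have hEq : (⋂ i, U i) = ⋂ n, (φ n) ⁻¹' {0} := by
      ext t
      constructor
      · intro ht
        refine mem_iInter.mpr fun n => ?_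
        have := hφ0 n ht
        simpa using this
      · intro ht
        refine mem_iInter.mpr fun n => ?_
        by_contra hc
        have h1 := hφ1 n hc
        have h2 : φ n t = 0 := by simpa using mem_iInter.mp ht n
        simp only [Pi.one_apply] at h1
        rw [h2] at h1
        norm_num at h1
    rw [hEq]
    exact analytic_NT_iInter hinj hlat hx hrange _
      (fun n => (isClosed_singleton).preimage (map_continuous (φ n)))
      (fun n => analytic_NT_zeroset hinj hlat hx hrange (φ n))

lemma clamp_eq_iff {c r : ℝ} (hr : 0 ≤ r) : ((c ⊓ r) ⊔ (-r)) = c ↔ |c| ≤ r := by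
  constructor
  · intro h
    rw [abs_le]
    constructor
    · rw [← h]; exact le_sup_right
    · rw [← h]; exact sup_le inf_le_right (by linarith)
  · intro h
    rw [abs_le] at h
    rw [inf_eq_left.mpr h.2, sup_eq_left.mpr h.1]

end Stmt6Aux
end Aux

open Stmt6Aux in
/-- If `C(K, ℝ)` is lattice-isomorphic, via `T`, to a principal ideal of a separable Banach
lattice `E`, then for every σ-generated closed set `L ⊆ K` and every `r ≥ 0`, the set
`{T f : ‖f|_L‖_∞ ≤ r}` is an analytic subset of `E`. -/
theorem stmt_6 (K : Type) [TopologicalSpace K] [CompactSpace K] [T2Space K]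
    (E : Type) [NormedAddCommGroup E] [Lattice E] [IsOrderedAddMonoid E] [HasSolidNorm E]
    [NormedSpace ℝ E] [PosSMulStrictMono ℝ E] [PosSMulReflectLT ℝ E]
    [CompleteSpace E] [TopologicalSpace.SeparableSpace E]
    (x : E) (hx : 0 ≤ x) (T : C(K, ℝ) →ₗ[ℝ] E)
    (hinj : Function.Injective T)
    (hlat : ∀ f g : C(K, ℝ), T (f ⊔ g) = T f ⊔ T g)
    (hrange : Set.range T = {y : E | ∃ r : ℝ, 0 < r ∧ |y| ≤ r • x})
    (L : Set K) (hLc : IsClosed L) (hL : SigmaGeneratedClosed K L)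
    (r : ℝ) (hr : 0 ≤ r) :
    MeasureTheory.AnalyticSet {y : E | ∃ f : C(K, ℝ), y = T f ∧ ∀ t ∈ L, |f t| ≤ r} := by
  classical
  -- the family of closed sets `C` for which `NT T C` is analytic
  set 𝔉 : Set (Set K) := {C | IsClosed C ∧ AnalyticSet (NT T C)} with h𝔉
  have hLF : L ∈ 𝔉 := by
    refine hL 𝔉 (fun C hC => hC.1)
      (fun C hc hg => ⟨hc, analytic_NT_gdelta hinj hlat hx hrange C hc hg⟩)
      (fun s hs => ⟨isClosed_iInter fun n => (hs n).1,
        analytic_NT_iInter hinj hlat hx hrange s (fun n => (hs n).1) (fun n => (hs n).2)⟩)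
      (fun s hs => ⟨isClosed_closure, by
        rw [NT_closure_iUnion hinj]
        exact MeasureTheory.AnalyticSet.iInter fun n => (hs n).2⟩)
  have hNTL : AnalyticSet (NT T L) := hLF.2
  -- the truncation map
  set a : E := T (r • 1) with hadef
  set Φ : E → E := fun y => y - ((y ⊓ a) ⊔ (-a)) with hΦdef
  have hΦc : Continuous Φ :=
    continuous_id.sub ((continuous_id.inf continuous_const).sup continuous_const)
  have hΦT : ∀ f : C(K, ℝ), Φ (T f) = T (f - ((f ⊓ r • 1) ⊔ (-(r • 1)))) := by
    intro f
    have h1 : T f ⊓ a = T (f ⊓ r • 1) := (Tinf hlat f (r • 1)).symm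
    have h2 : (T f ⊓ a) ⊔ (-a) = T ((f ⊓ r • 1) ⊔ (-(r • 1))) := by
      rw [h1, hadef, ← map_neg, ← hlat]
    rw [hΦdef]
    simp only
    rw [h2, ← map_sub]
  have hset : {y : E | ∃ f : C(K, ℝ), y = T f ∧ ∀ t ∈ L, |f t| ≤ r}
      = Prod.fst '' ((Prod.fst ⁻¹' Set.range T) ∩ (Prod.snd ⁻¹' NT T L)
          ∩ {p : E × E | p.2 = Φ p.1}) := by
    ext y
    constructor
    · rintro ⟨f, rfl, hf⟩
      refine ⟨(T f, Φ (T f)), ⟨⟨⟨f, rfl⟩, ?_⟩, rfl⟩, rfl⟩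
      show Φ (T f) ∈ NT T L
      rw [hΦT f]
      refine ⟨_, rfl, fun t ht => ?_⟩
      have h1 : ((f ⊓ r • 1) ⊔ (-(r • 1))) t = (f t ⊓ r) ⊔ (-r) := by simp
      have h2 : ((f t ⊓ r) ⊔ (-r)) = f t := (clamp_eq_iff hr).mpr (hf t ht)
      simp only [ContinuousMap.sub_apply, h1, h2, sub_self]
    · rintro ⟨⟨y1, y2⟩, ⟨⟨⟨f, hf⟩, hNT⟩, hgraph⟩, rfl⟩
      simp only [mem_preimage, mem_setOf_eq] at hNT hgraph
      subst hf
      rw [hgraph, hΦT f] at hNT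
      obtain ⟨g, hg, hg0⟩ := hNT
      have hgeq : g = f - ((f ⊓ r • 1) ⊔ (-(r • 1))) := hinj hg.symm
      refine ⟨f, rfl, fun t ht => ?_⟩
      have h0 := hg0 t ht
      rw [hgeq] at h0
      have h1 : ((f ⊓ r • 1) ⊔ (-(r • 1))) t = (f t ⊓ r) ⊔ (-r) := by simp
      simp only [ContinuousMap.sub_apply, h1] at h0
      have h2 : ((f t ⊓ r) ⊔ (-r)) = f t := by linarith
      exact (clamp_eq_iff hr).mp h2
  rw [hset]
  refine MeasureTheory.AnalyticSet.image_of_continuous ?_ continuous_fst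
  refine analytic_inter (analytic_inter ?_ ?_) ?_
  · exact (analytic_range hx hrange).preimage continuous_fst
  · exact hNTL.preimage continuous_snd
  · exact (isClosed_eq continuous_snd (hΦc.comp continuous_fst)).analyticSet
end

section
/- Let K be a compact Hausdorff space, (D_n)_{n∈ℕ} a sequence of nonempty closed subsets of K, and (t_n)_{n∈ℕ} a sequence of real numbers. Then there exists a continuous function f : K → ℝ such that f(x) = t_n for all x ∈ D_n and all n ∈ ℕ if and only if the sequence (t_n) is bounded and for all reals p < q the sets closure(⋃{D_n : t_n ≤ p}) and closure(⋃{D_n : t_n ≥ q}) are disjoint. -/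
open Set Topology

lemma step_aux {K : Type} [TopologicalSpace K] [CompactSpace K] [T2Space K]
    {D : ℕ → Set K} {t : ℕ → ℝ}
    (hdisj : ∀ p q : ℝ, p < q →
      Disjoint (closure (⋃ n ∈ {n : ℕ | t n ≤ p}, D n))
        (closure (⋃ n ∈ {n : ℕ | q ≤ t n}, D n)))
    {δ : ℝ} (hδ : 0 < δ) (g : C(K, ℝ)) (hg : ∀ n, ∀ x ∈ D n, |g x - t n| ≤ δ) :
    ∃ g' : C(K, ℝ), ‖g' - g‖ ≤ δ / 3 ∧ ∀ n, ∀ x ∈ D n, |g' x - t n| ≤ 2 / 3 * δ := by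
  set A := closure (⋃ n, {x ∈ D n | δ / 3 ≤ g x - t n}) with hA
  set B := closure (⋃ n, {x ∈ D n | g x - t n ≤ -(δ / 3)}) with hB
  have hAB : Disjoint A B := by
    rw [Set.disjoint_left]
    intro z hzA hzB
    have hpq : g z + δ / 12 - δ / 3 < g z - δ / 12 + δ / 3 := by linarith
    have hzp : z ∈ closure (⋃ n ∈ {n : ℕ | t n ≤ g z + δ / 12 - δ / 3}, D n) := by
      rw [mem_closure_iff]
      intro V hV hzV
      have hU : IsOpen (V ∩ {x | g x < g z + δ / 12}) :=
        hV.inter (isOpen_lt g.continuous continuous_const)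
      have hzU : z ∈ V ∩ {x | g x < g z + δ / 12} := ⟨hzV, by simp; linarith⟩
      rcases mem_closure_iff.mp hzA _ hU hzU with ⟨x, ⟨hxV, hxg⟩, hxS⟩
      simp only [mem_iUnion] at hxS
      rcases hxS with ⟨n, hxD, hxe⟩
      refine ⟨x, hxV, ?_⟩
      simp only [mem_iUnion, mem_setOf_eq] at hxg ⊢
      exact ⟨n, by linarith, hxD⟩
    have hzq : z ∈ closure (⋃ n ∈ {n : ℕ | g z - δ / 12 + δ / 3 ≤ t n}, D n) := by
      rw [mem_closure_iff]
      intro V hV hzV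
      have hU : IsOpen (V ∩ {x | g z - δ / 12 < g x}) :=
        hV.inter (isOpen_lt continuous_const g.continuous)
      have hzU : z ∈ V ∩ {x | g z - δ / 12 < g x} := ⟨hzV, by simp; linarith⟩
      rcases mem_closure_iff.mp hzB _ hU hzU with ⟨x, ⟨hxV, hxg⟩, hxS⟩
      simp only [mem_iUnion] at hxS
      rcases hxS with ⟨n, hxD, hxe⟩
      refine ⟨x, hxV, ?_⟩
      simp only [mem_iUnion, mem_setOf_eq] at hxg ⊢
      exact ⟨n, by linarith, hxD⟩
    exact Set.disjoint_left.mp (hdisj _ _ hpq) hzp hzq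
  obtain ⟨v, hvB, hvA, hv01⟩ :=
    exists_continuous_zero_one_of_isClosed isClosed_closure isClosed_closure hAB.symm
  set u : C(K, ℝ) := ⟨fun x => δ / 3 * (2 * v x - 1),
    continuous_const.mul ((continuous_const.mul v.continuous).sub continuous_const)⟩ with hu
  have hux : ∀ x, u x = δ / 3 * (2 * v x - 1) := fun x => rfl
  have hub : ∀ x, |u x| ≤ δ / 3 := by
    intro x
    have h1 : |2 * v x - 1| ≤ 1 := abs_le.mpr ⟨by linarith [(hv01 x).1], by linarith [(hv01 x).2]⟩
    rw [hux, abs_mul, abs_of_pos (by linarith : (0:ℝ) < δ / 3)]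
    nlinarith
  refine ⟨g - u, ?_, ?_⟩
  · rw [show g - u - g = -u by ring]
    rw [ContinuousMap.norm_le _ (by linarith : (0:ℝ) ≤ δ / 3)]
    intro x
    simpa using hub x
  · intro n x hx
    have he : |g x - t n| ≤ δ := hg n x hx
    simp only [ContinuousMap.sub_apply]
    rcases le_or_gt (δ / 3) (g x - t n) with h1 | h1
    · have hxA : x ∈ A := subset_closure (mem_iUnion.mpr ⟨n, hx, h1⟩)
      have hv1 : v x = 1 := hvA hxA
      rw [hux, hv1]
      rw [abs_le] at he ⊢
      constructor <;> [linarith; linarith]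
    rcases le_or_gt (g x - t n) (-(δ / 3)) with h2 | h2
    · have hxB : x ∈ B := subset_closure (mem_iUnion.mpr ⟨n, hx, h2⟩)
      have hv0 : v x = 0 := hvB hxB
      rw [hux, hv0]
      rw [abs_le] at he ⊢
      constructor <;> [linarith; linarith]
    · have := hub x
      rw [abs_le] at this ⊢
      constructor <;> linarith

/-- Extension criterion: given nonempty closed sets `D n` in a compact Hausdorff space `K` and
reals `t n`, there is a continuous `f : K → ℝ` constantly equal to `t n` on each `D n` if and
only if `(t n)` is bounded and for all `p < q` the closures of `⋃ {D n : t n ≤ p}` and of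
`⋃ {D n : t n ≥ q}` are disjoint. -/
theorem stmt_7 (K : Type) [TopologicalSpace K] [CompactSpace K] [T2Space K]
    (D : ℕ → Set K) (hcl : ∀ n, IsClosed (D n)) (hne : ∀ n, (D n).Nonempty)
    (t : ℕ → ℝ) :
    (∃ f : C(K, ℝ), ∀ n, ∀ x ∈ D n, f x = t n) ↔
      ((∃ M : ℝ, ∀ n, |t n| ≤ M) ∧
        ∀ p q : ℝ, p < q →
          Disjoint (closure (⋃ n ∈ {n : ℕ | t n ≤ p}, D n))
            (closure (⋃ n ∈ {n : ℕ | q ≤ t n}, D n))) := by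
  constructor
  · rintro ⟨f, hf⟩
    refine ⟨⟨‖f‖, fun n => ?_⟩, fun p q hpq => ?_⟩
    · obtain ⟨x, hx⟩ := hne n
      rw [← hf n x hx]
      exact f.norm_coe_le_norm x
    · have h1 : closure (⋃ n ∈ {n : ℕ | t n ≤ p}, D n) ⊆ f ⁻¹' (Iic p) := by
        apply closure_minimal _ (isClosed_Iic.preimage f.continuous)
        rintro x hx
        simp only [mem_iUnion, mem_setOf_eq] at hx
        obtain ⟨n, hn, hxD⟩ := hx
        simp only [mem_preimage, mem_Iic, hf n x hxD]
        exact hn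
      have h2 : closure (⋃ n ∈ {n : ℕ | q ≤ t n}, D n) ⊆ f ⁻¹' (Ici q) := by
        apply closure_minimal _ (isClosed_Ici.preimage f.continuous)
        rintro x hx
        simp only [mem_iUnion, mem_setOf_eq] at hx
        obtain ⟨n, hn, hxD⟩ := hx
        simp only [mem_preimage, mem_Ici, hf n x hxD]
        exact hn
      refine Disjoint.mono h1 h2 (Set.disjoint_left.mpr fun x hx1 hx2 => ?_)
      simp only [mem_preimage, mem_Iic, mem_Ici] at hx1 hx2
      linarith
  · rintro ⟨⟨M, hM⟩, hdisj⟩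
    set C : ℝ := M + 1 with hC
    have hC0 : 0 < C := by
      have := hM 0
      have := abs_nonneg (t 0)
      rw [hC]; linarith
    have key : ∀ (k : ℕ) (g : C(K, ℝ)), (∀ n, ∀ x ∈ D n, |g x - t n| ≤ C * (2/3)^k) →
        ∃ g' : C(K, ℝ), ‖g' - g‖ ≤ C * (2/3)^k / 3 ∧
          ∀ n, ∀ x ∈ D n, |g' x - t n| ≤ C * (2/3)^(k+1) := by
      intro k g hg
      obtain ⟨g', h1, h2⟩ := step_aux hdisj
        (by positivity : (0:ℝ) < C * (2/3)^k) g hg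
      refine ⟨g', h1, fun n x hx => ?_⟩
      calc |g' x - t n| ≤ 2/3 * (C * (2/3)^k) := h2 n x hx
        _ = C * (2/3)^(k+1) := by ring
    choose next hnext1 hnext2 using key
    let H : ∀ k : ℕ, {g : C(K, ℝ) // ∀ n, ∀ x ∈ D n, |g x - t n| ≤ C * (2/3)^k} :=
      fun k => Nat.rec
        ⟨0, fun n x hx => by
          simp only [ContinuousMap.zero_apply, zero_sub, abs_neg, pow_zero, mul_one]
          exact le_trans (hM n) (by linarith)⟩
        (fun k p => ⟨next k p.1 p.2, hnext2 k p.1 p.2⟩) k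
    set G : ℕ → C(K, ℝ) := fun k => (H k).1 with hG
    have hGd : ∀ k, dist (G k) (G (k+1)) ≤ (C/3) * (2/3)^k := by
      intro k
      rw [dist_eq_norm, norm_sub_rev]
      calc ‖G (k+1) - G k‖ ≤ C * (2/3)^k / 3 := hnext1 k (H k).1 (H k).2
        _ = C/3 * (2/3)^k := by ring
    have hcauchy : CauchySeq G := cauchySeq_of_le_geometric (2/3) (C/3) (by norm_num) hGd
    obtain ⟨f, hflim⟩ := cauchySeq_tendsto_of_complete hcauchy
    refine ⟨f, fun n x hx => ?_⟩
    have heval : Filter.Tendsto (fun k => G k x) Filter.atTop (nhds (f x)) :=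
      ((continuous_eval_const x).tendsto f).comp hflim
    have hlim2 : Filter.Tendsto (fun k => G k x) Filter.atTop (nhds (t n)) := by
      rw [tendsto_iff_dist_tendsto_zero]
      apply squeeze_zero (fun k => dist_nonneg) (fun k => ?_)
      · have : Filter.Tendsto (fun k : ℕ => C * (2/3)^k) Filter.atTop (nhds (C * 0)) :=
          (tendsto_pow_atTop_nhds_zero_of_lt_one (by norm_num) (by norm_num)).const_mul C
        simpa using this
      · rw [Real.dist_eq]
        exact (H k).2 n x hx
    exact tendsto_nhds_unique heval hlim2
end

section
/- Let K be a sick compactum and let (D_n)_{n∈ℕ} be a sequence of σ-generated closed subsets of K. Then the set S = { (t_n) ∈ ℝ^ℕ : there exists f ∈ C(K,ℝ) such that f(x) = t_n for all x ∈ D_n and all n ∈ ℕ } is an analytic subset of ℝ^ℕ with the product topology. -/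
open MeasureTheory Topology Filter Set

set_option linter.unusedSectionVars false
set_option linter.unusedVariables false
set_option maxHeartbeats 1200000

section Aux
variable {K : Type} [TopologicalSpace K] [CompactSpace K] [T2Space K]
variable {E : Type} [NormedAddCommGroup E] [Lattice E] [IsOrderedAddMonoid E]
  [HasSolidNorm E] [NormedSpace ℝ E] [PosSMulStrictMono ℝ E] [PosSMulReflectLT ℝ E]
  [CompleteSpace E] [TopologicalSpace.SeparableSpace E]

def VV (T : C(K, ℝ) →ₗ[ℝ] E) (C : Set K) : Set (E × ℝ) :=
  {p | 0 ≤ p.2 ∧ ∃ f : C(K, ℝ), T f = p.1 ∧ ∀ x ∈ C, |f x| ≤ p.2}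

variable {u : E} {T : C(K, ℝ) →ₗ[ℝ] E}

lemma Tmono (hsup : ∀ f g : C(K, ℝ), T (f ⊔ g) = T f ⊔ T g)
    {f g : C(K, ℝ)} (h : f ≤ g) : T f ≤ T g := by
  have : T f ⊔ T g = T g := by rw [← hsup, sup_eq_right.2 h]
  exact le_of_sup_eq this

lemma Trefl (hinj : Function.Injective T)
    (hsup : ∀ f g : C(K, ℝ), T (f ⊔ g) = T f ⊔ T g)
    {f g : C(K, ℝ)} (h : T f ≤ T g) : f ≤ g := by
  have : T (f ⊔ g) = T g := by rw [hsup, sup_eq_right.2 h]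
  exact le_of_sup_eq (hinj this)

lemma Tabs (hsup : ∀ f g : C(K, ℝ), T (f ⊔ g) = T f ⊔ T g)
    (f : C(K, ℝ)) : T |f| = |T f| := by
  have h1 : |f| = f ⊔ (-f) := rfl
  have h2 : |T f| = T f ⊔ (-(T f)) := rfl
  rw [h1, h2, hsup, map_neg]

lemma Tle_iff (hinj : Function.Injective T)
    (hsup : ∀ f g : C(K, ℝ), T (f ⊔ g) = T f ⊔ T g)
    {f g : C(K, ℝ)} : |T f| ≤ T g ↔ |f| ≤ g := by
  rw [← Tabs hsup]
  exact ⟨Trefl hinj hsup, Tmono hsup⟩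

lemma rangeT_eq (hu : 0 ≤ u)
    (hrange : Set.range T = {y : E | ∃ r : ℝ, 0 < r ∧ |y| ≤ r • u}) :
    Set.range T = ⋃ m : ℕ, {y : E | |y| ≤ ((m : ℝ) + 1) • u} := by
  rw [hrange]
  ext y
  simp only [Set.mem_setOf_eq, Set.mem_iUnion]
  constructor
  · rintro ⟨r, hr, hle⟩
    refine ⟨⌈r⌉₊, hle.trans ?_⟩
    rw [← sub_nonneg, ← sub_smul]
    exact smul_nonneg (by linarith [Nat.le_ceil r]) hu
  · rintro ⟨m, hm⟩
    exact ⟨(m : ℝ) + 1, by positivity, hm⟩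

lemma rangeT_measurable (hu : 0 ≤ u)
    (hrange : Set.range T = {y : E | ∃ r : ℝ, 0 < r ∧ |y| ≤ r • u})
    [MeasurableSpace E] [BorelSpace E] : MeasurableSet (Set.range T) := by
  rw [rangeT_eq hu hrange]
  exact MeasurableSet.iUnion fun m =>
    (isClosed_le (continuous_id.sup continuous_neg) continuous_const).measurableSet

lemma VV_gdelta (hu : 0 ≤ u) (hinj : Function.Injective T)
    (hsup : ∀ f g : C(K, ℝ), T (f ⊔ g) = T f ⊔ T g) (hT1 : T 1 = u)
    (hrange : Set.range T = {y : E | ∃ r : ℝ, 0 < r ∧ |y| ≤ r • u})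
    {C : Set K} (hC : IsClosed C) (hGδ : IsGδ C) : AnalyticSet (VV T C) := by
  borelize E
  obtain ⟨f₀, hCeq, -, -, hf₀01⟩ :=
    exists_continuous_one_zero_of_isCompact_of_isGδ hC.isCompact hGδ isClosed_empty
      (Set.disjoint_empty _)
  set g : C(K, ℝ) := 1 - f₀ with hgdef
  have hg0 : ∀ x, 0 ≤ g x := fun x => by
    simp only [hgdef, ContinuousMap.sub_apply, ContinuousMap.one_apply, sub_nonneg]
    exact (hf₀01 x).2
  have hgC : ∀ x ∈ C, g x = 0 := fun x hx => by
    have h1 : f₀ x = 1 := by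
      have := hCeq.subset hx; simpa using this
    simp [hgdef, h1]
  have hgpos : ∀ x, x ∉ C → 0 < g x := fun x hx => by
    have h1 : f₀ x ≠ 1 := fun h => hx (by rw [hCeq]; simpa using h)
    have h2 := (hf₀01 x).2
    simp only [hgdef, ContinuousMap.sub_apply, ContinuousMap.one_apply]
    cases' lt_or_eq_of_le h2 with h h
    · linarith
    · exact absurd h h1
  have key : VV T C = {p : E × ℝ | 0 ≤ p.2} ∩ (Prod.fst ⁻¹' Set.range T) ∩
      ⋂ (k : ℕ), ⋃ (m : ℕ),
        {p : E × ℝ | |p.1| ≤ (p.2 + 1 / ((k : ℝ) + 1)) • u + (m : ℝ) • T g} := by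
    ext p
    simp only [VV, Set.mem_setOf_eq, Set.mem_inter_iff, Set.mem_preimage, Set.mem_iInter,
      Set.mem_iUnion]
    constructor
    · rintro ⟨hε, f, hTf, hb⟩
      refine ⟨⟨hε, ⟨f, hTf⟩⟩, fun k => ?_⟩
      set δ : ℝ := 1 / ((k : ℝ) + 1) with hδdef
      have hδ : 0 < δ := by positivity
      have claim : ∃ m : ℕ, |f| ≤ (p.2 + δ) • (1 : C(K, ℝ)) + (m : ℝ) • g := by
        set F : Set K := {x | p.2 + δ ≤ |f x|} with hFdef
        have hFc : IsCompact F :=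
          (isClosed_le continuous_const f.continuous.abs).isCompact
        have hFC : ∀ x ∈ F, x ∉ C := fun x hxF hxC => by
          have := hb x hxC
          have : p.2 + δ ≤ |f x| := hxF
          linarith [hb x hxC]
        by_cases hF : F.Nonempty
        · obtain ⟨x₀, hx₀, hmin⟩ := hFc.exists_isMinOn hF g.continuous.continuousOn
          have hα : 0 < g x₀ := hgpos x₀ (hFC x₀ hx₀)
          obtain ⟨m, hm⟩ := exists_nat_ge (‖f‖ / g x₀)
          refine ⟨m, ContinuousMap.le_def.2 fun x => ?_⟩
          simp only [ContinuousMap.abs_apply, ContinuousMap.add_apply,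
            ContinuousMap.smul_apply, ContinuousMap.one_apply, smul_eq_mul, mul_one]
          by_cases hx : x ∈ F
          · have h1 : |f x| ≤ ‖f‖ := by
              simpa [Real.norm_eq_abs] using f.norm_coe_le_norm x
            have h2 : g x₀ ≤ g x := hmin hx
            have h3 : ‖f‖ ≤ (m : ℝ) * g x₀ := by
              rw [div_le_iff₀ hα] at hm; linarith
            have h4 : (m : ℝ) * g x₀ ≤ (m : ℝ) * g x :=
              mul_le_mul_of_nonneg_left h2 (Nat.cast_nonneg m)
            have h5 : (0 : ℝ) ≤ p.2 + δ := by linarith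
            linarith
          · have h1 : |f x| < p.2 + δ := by
              simpa [hFdef] using hx
            have h2 : 0 ≤ (m : ℝ) * g x :=
              mul_nonneg (Nat.cast_nonneg m) (hg0 x)
            linarith
        · refine ⟨0, ContinuousMap.le_def.2 fun x => ?_⟩
          have hx : x ∉ F := fun h => hF ⟨x, h⟩
          have h1 : |f x| < p.2 + δ := by simpa [hFdef] using hx
          simp only [ContinuousMap.abs_apply, ContinuousMap.add_apply,
            ContinuousMap.smul_apply, ContinuousMap.one_apply, smul_eq_mul, mul_one,
            Nat.cast_zero, zero_mul]
          linarith
      obtain ⟨m, hmle⟩ := claim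
      refine ⟨m, ?_⟩
      have hrhs : (p.2 + δ) • u + (m : ℝ) • T g
          = T ((p.2 + δ) • (1 : C(K, ℝ)) + (m : ℝ) • g) := by
        rw [map_add, _root_.map_smul, _root_.map_smul, hT1]
      rw [← hTf, hrhs]
      exact (Tle_iff hinj hsup).2 hmle
    · rintro ⟨⟨hε, ⟨f, hTf⟩⟩, hk⟩
      refine ⟨hε, f, hTf, fun x hx => ?_⟩
      refine le_of_forall_pos_le_add fun δ hδ => ?_
      obtain ⟨k, hkδ⟩ := exists_nat_one_div_lt hδ
      obtain ⟨m, hm⟩ := hk k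
      have hrhs : (p.2 + 1 / ((k : ℝ) + 1)) • u + (m : ℝ) • T g
          = T ((p.2 + 1 / ((k : ℝ) + 1)) • (1 : C(K, ℝ)) + (m : ℝ) • g) := by
        rw [map_add, _root_.map_smul, _root_.map_smul, hT1]
      rw [← hTf, hrhs] at hm
      have hle := (Tle_iff hinj hsup).1 hm
      have := ContinuousMap.le_def.1 hle x
      simp only [ContinuousMap.abs_apply, ContinuousMap.add_apply,
        ContinuousMap.smul_apply, ContinuousMap.one_apply, smul_eq_mul, mul_one,
        hgC x hx, mul_zero, add_zero] at this
      linarith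
  rw [key]
  have hm : MeasurableSet ({p : E × ℝ | 0 ≤ p.2} ∩ (Prod.fst ⁻¹' Set.range T) ∩
      ⋂ (k : ℕ), ⋃ (m : ℕ),
        {p : E × ℝ | |p.1| ≤ (p.2 + 1 / ((k : ℝ) + 1)) • u + (m : ℝ) • T g}) := by
    refine (MeasurableSet.inter (MeasurableSet.inter ?_ ?_) ?_)
    · exact (isClosed_le continuous_const continuous_snd).measurableSet
    · exact measurable_fst (rangeT_measurable hu hrange)
    · refine MeasurableSet.iInter fun k => MeasurableSet.iUnion fun m => ?_
      refine (isClosed_le ?_ ?_).measurableSet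
      · exact (continuous_fst.sup continuous_fst.neg)
      · exact ((continuous_snd.add continuous_const).smul continuous_const).add
          continuous_const
  exact hm.analyticSet

lemma analyticSet_inter {α : Type*} [TopologicalSpace α] [T2Space α] {s t : Set α}
    (hs : AnalyticSet s) (ht : AnalyticSet t) : AnalyticSet (s ∩ t) := by
  have h : s ∩ t = ⋂ b : Bool, (if b then s else t) := by
    ext x; simp [Bool.forall_bool, and_comm]
  rw [h]
  exact AnalyticSet.iInter fun b => by cases b <;> simpa

lemma VV_closureUnion (hinj : Function.Injective T) (s : ℕ → Set K) :
    VV T (closure (⋃ n, s n)) = ⋂ n, VV T (s n) := by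
  ext p
  simp only [VV, Set.mem_iInter, Set.mem_setOf_eq]
  constructor
  · rintro ⟨hε, f, hTf, hb⟩ n
    exact ⟨hε, f, hTf, fun x hx => hb x (subset_closure (Set.mem_iUnion.2 ⟨n, hx⟩))⟩
  · intro h
    obtain ⟨hε, f, hTf, -⟩ := h 0
    refine ⟨hε, f, hTf, fun x hx => ?_⟩
    have hclosed : IsClosed {x | |f x| ≤ p.2} := isClosed_le f.continuous.abs continuous_const
    have hsub : (⋃ n, s n) ⊆ {x | |f x| ≤ p.2} := by
      refine Set.iUnion_subset fun n x hxn => ?_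
      obtain ⟨-, fn, hTfn, hbn⟩ := h n
      have hfn : fn = f := hinj (hTfn.trans hTf.symm)
      exact hfn ▸ hbn x hxn
    exact hclosed.closure_subset_iff.2 hsub hx

lemma VV_inter (hu : 0 ≤ u) (hinj : Function.Injective T)
    (hsup : ∀ f g : C(K, ℝ), T (f ⊔ g) = T f ⊔ T g) (hT1 : T 1 = u)
    (hrange : Set.range T = {y : E | ∃ r : ℝ, 0 < r ∧ |y| ≤ r • u})
    {A B : Set K} (hA : IsClosed A) (hB : IsClosed B)
    (hVA : AnalyticSet (VV T A)) (hVB : AnalyticSet (VV T B)) :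
    AnalyticSet (VV T (A ∩ B)) := by
  borelize E
  have key : VV T (A ∩ B) = {p : E × ℝ | 0 ≤ p.2} ∩ (Prod.fst ⁻¹' Set.range T) ∩
      ⋂ (k : ℕ), (fun q : (E × ℝ) × E × E => q.1) ''
        (((fun q : (E × ℝ) × E × E => (q.2.1, (0 : ℝ))) ⁻¹' VV T A) ∩
         ((fun q : (E × ℝ) × E × E => (q.2.2, (0 : ℝ))) ⁻¹' VV T B) ∩
         {q : (E × ℝ) × E × E |
            |q.1.1| ≤ (q.1.2 + 1 / ((k : ℝ) + 1)) • u + q.2.1 + q.2.2}) := by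
    ext p
    simp only [Set.mem_inter_iff, Set.mem_setOf_eq, Set.mem_preimage, Set.mem_iInter,
      Set.mem_image, Prod.exists, VV]
    constructor
    · rintro ⟨hε, f, hTf, hb⟩
      refine ⟨⟨hε, ⟨f, hTf⟩⟩, fun k => ?_⟩
      set δ : ℝ := 1 / ((k : ℝ) + 1) with hδdef
      have hδ : 0 < δ := by positivity
      set F : Set K := {x | p.2 + δ ≤ |f x|} with hFdef
      have hFcl : IsClosed F := isClosed_le continuous_const f.continuous.abs
      have hdisj : Disjoint A (B ∩ F) := by
        rw [Set.disjoint_left]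
        rintro x hxA ⟨hxB, hxF⟩
        have h1 := hb x ⟨hxA, hxB⟩
        have h2 : p.2 + δ ≤ |f x| := hxF
        linarith
      obtain ⟨φ, hφA, hφBF, hφ01⟩ :=
        exists_continuous_zero_one_of_isClosed hA (hB.inter hFcl) hdisj
      set ρ : C(K, ℝ) := (|f| - (p.2 + δ) • 1) ⊔ 0 with hρdef
      have hρx : ∀ x, ρ x = max (|f x| - (p.2 + δ)) 0 := fun x => by
        simp [hρdef]
      set w : C(K, ℝ) := ρ * φ with hwdef
      set v : C(K, ℝ) := ρ * (1 - φ) with hvdef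
      have hwv : ρ = w + v := by
        rw [hwdef, hvdef]; ring
      have hwA : ∀ x ∈ A, w x = 0 := fun x hx => by
        simp [hwdef, hφA hx]
      have hvB : ∀ x ∈ B, v x = 0 := fun x hx => by
        by_cases hxF : x ∈ F
        · have : φ x = 1 := hφBF ⟨hx, hxF⟩
          simp [hvdef, this]
        · have h1 : |f x| < p.2 + δ := by simpa [hFdef] using hxF
          have : ρ x = 0 := by
            rw [hρx]; exact max_eq_right (by linarith)
          simp [hvdef, this]
      have hfρ : |f| ≤ (p.2 + δ) • (1 : C(K, ℝ)) + ρ := by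
        refine ContinuousMap.le_def.2 fun x => ?_
        simp only [ContinuousMap.abs_apply, ContinuousMap.add_apply,
          ContinuousMap.smul_apply, ContinuousMap.one_apply, smul_eq_mul, mul_one, hρx]
        rcases le_or_gt (|f x|) (p.2 + δ) with h | h
        · have : (0:ℝ) ≤ max (|f x| - (p.2 + δ)) 0 := le_max_right _ _
          linarith
        · have : max (|f x| - (p.2 + δ)) 0 = |f x| - (p.2 + δ) :=
            max_eq_left (by linarith)
          linarith [this.ge]
      refine ⟨p.1, p.2, T w, T v, ⟨⟨?_, ?_⟩, ?_⟩, rfl⟩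
      · exact ⟨le_refl 0, w, rfl, fun x hx => by rw [hwA x hx]; simp⟩
      · exact ⟨le_refl 0, v, rfl, fun x hx => by rw [hvB x hx]; simp⟩
      · have h1 : |T f| ≤ T ((p.2 + δ) • (1 : C(K, ℝ)) + ρ) :=
          (Tle_iff hinj hsup).2 hfρ
        have h2 : T ((p.2 + δ) • (1 : C(K, ℝ)) + ρ)
            = (p.2 + δ) • u + T w + T v := by
          rw [hwv, map_add, map_add, _root_.map_smul, hT1, add_assoc]
        rw [← hTf]
        rw [h2] at h1
        exact h1
    · rintro ⟨⟨hε, ⟨f, hTf⟩⟩, hk⟩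
      refine ⟨hε, f, hTf, fun x hx => ?_⟩
      refine le_of_forall_pos_le_add fun δ hδ => ?_
      obtain ⟨k, hkδ⟩ := exists_nat_one_div_lt hδ
      obtain ⟨y, ε, z₁, z₂, ⟨⟨hz₁, hz₂⟩, hineq⟩, heq⟩ := hk k
      obtain ⟨y_eq, ε_eq⟩ := Prod.ext_iff.1 heq
      simp only at y_eq ε_eq
      subst y_eq; subst ε_eq
      obtain ⟨-, w, hTw, hwb⟩ := hz₁
      obtain ⟨-, v, hTv, hvb⟩ := hz₂
      have hrhs : (p.2 + 1 / ((k : ℝ) + 1)) • u + z₁ + z₂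
          = T ((p.2 + 1 / ((k : ℝ) + 1)) • (1 : C(K, ℝ)) + w + v) := by
        rw [map_add, map_add, _root_.map_smul, hT1, hTw, hTv]
      rw [← hTf, hrhs] at hineq
      have hle := (Tle_iff hinj hsup).1 hineq
      have hx' := ContinuousMap.le_def.1 hle x
      have hw0 : w x = 0 := abs_nonpos_iff.1 (hwb x hx.1)
      have hv0 : v x = 0 := abs_nonpos_iff.1 (hvb x hx.2)
      simp only [ContinuousMap.abs_apply, ContinuousMap.add_apply,
        ContinuousMap.smul_apply, ContinuousMap.one_apply, smul_eq_mul, mul_one,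
        hw0, hv0, add_zero] at hx'
      linarith
  rw [key]
  refine analyticSet_inter (analyticSet_inter ?_ ?_) (AnalyticSet.iInter fun k => ?_)
  · exact (isClosed_le continuous_const continuous_snd).analyticSet
  · exact ((rangeT_measurable hu hrange).preimage measurable_fst).analyticSet
  · refine AnalyticSet.image_of_continuous ?_ continuous_fst
    refine analyticSet_inter (analyticSet_inter ?_ ?_) ?_
    · exact hVA.preimage ((continuous_fst.comp continuous_snd).prodMk continuous_const)
    · exact hVB.preimage ((continuous_snd.comp continuous_snd).prodMk continuous_const)
    · refine IsClosed.analyticSet (isClosed_le ?_ ?_)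
      · exact (continuous_fst.fst.sup continuous_fst.fst.neg)
      · exact (((continuous_fst.snd.add continuous_const).smul continuous_const).add
          continuous_snd.fst).add continuous_snd.snd

lemma VV_iInter (hu : 0 ≤ u) (hinj : Function.Injective T)
    (hsup : ∀ f g : C(K, ℝ), T (f ⊔ g) = T f ⊔ T g) (hT1 : T 1 = u)
    (hrange : Set.range T = {y : E | ∃ r : ℝ, 0 < r ∧ |y| ≤ r • u})
    (s : ℕ → Set K) (hscl : ∀ n, IsClosed (s n))
    (hsA : ∀ n, AnalyticSet (VV T (s n))) :
    AnalyticSet (VV T (⋂ n, s n)) := by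
  borelize E
  set W : ℕ → Set K := fun N => ⋂ n ∈ Finset.range (N + 1), s n with hWdef
  have hWmem : ∀ N x, x ∈ W N ↔ ∀ n ≤ N, x ∈ s n := by
    intro N x
    simp [hWdef, Nat.lt_succ_iff]
  have hWcl : ∀ N, IsClosed (W N) := fun N =>
    isClosed_biInter fun n _ => hscl n
  have hWA : ∀ N, AnalyticSet (VV T (W N)) := by
    intro N
    induction N with
    | zero =>
      have : W 0 = s 0 := by
        ext x; simp [hWmem, Nat.le_zero]
      rw [this]; exact hsA 0
    | succ N ih =>
      have : W (N + 1) = W N ∩ s (N + 1) := by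
        ext x
        simp only [hWmem, Set.mem_inter_iff]
        constructor
        · intro h
          exact ⟨fun n hn => h n (hn.trans (Nat.le_succ N)), h (N + 1) le_rfl⟩
        · rintro ⟨h1, h2⟩ n hn
          rcases Nat.lt_succ_iff_lt_or_eq.1 (Nat.lt_succ_of_le hn) with h | h
          · exact h1 n (Nat.lt_succ_iff.1 h)
          · exact h ▸ h2
      rw [this]
      exact VV_inter hu hinj hsup hT1 hrange (hWcl N) (hscl (N + 1)) ih (hsA (N + 1))
  have hWsub : ∀ N, (⋂ n, s n) ⊆ W N := fun N x hx =>
    (hWmem N x).2 fun n _ => Set.mem_iInter.1 hx n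
  have hWiInter : (⋂ N, W N) = ⋂ n, s n := by
    apply Set.Subset.antisymm
    · intro x hx
      refine Set.mem_iInter.2 fun n => ?_
      exact (hWmem n x).1 (Set.mem_iInter.1 hx n) n le_rfl
    · intro x hx
      exact Set.mem_iInter.2 fun N => hWsub N hx
  have key : VV T (⋂ n, s n) = {p : E × ℝ | 0 ≤ p.2} ∩ (Prod.fst ⁻¹' Set.range T) ∩
      ⋂ (k : ℕ), ⋃ (N : ℕ),
        (fun p : E × ℝ => (p.1, p.2 + 1 / ((k : ℝ) + 1))) ⁻¹' VV T (W N) := by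
    ext p
    simp only [Set.mem_inter_iff, Set.mem_setOf_eq, Set.mem_preimage, Set.mem_iInter,
      Set.mem_iUnion, VV]
    constructor
    · rintro ⟨hε, f, hTf, hb⟩
      refine ⟨⟨hε, ⟨f, hTf⟩⟩, fun k => ?_⟩
      set δ : ℝ := 1 / ((k : ℝ) + 1) with hδdef
      have hδ : 0 < δ := by positivity
      by_contra hcon
      push_neg at hcon
      set G : ℕ → Set K := fun N => W N ∩ {x | p.2 + δ ≤ |f x|} with hGdef
      have hGcl : ∀ N, IsClosed (G N) := fun N =>
        (hWcl N).inter (isClosed_le continuous_const f.continuous.abs)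
      have hGne : ∀ N, (G N).Nonempty := by
        intro N
        obtain ⟨x, hxW, hxgt⟩ := hcon N (by linarith) f hTf
        exact ⟨x, hxW, le_of_lt hxgt⟩
      have hGdec : ∀ N, G (N + 1) ⊆ G N := by
        intro N x hx
        refine ⟨?_, hx.2⟩
        exact (hWmem N x).2 fun n hn => (hWmem (N + 1) x).1 hx.1 n (hn.trans (Nat.le_succ N))
      obtain ⟨x, hx⟩ := IsCompact.nonempty_iInter_of_sequence_nonempty_isCompact_isClosed
        G hGdec hGne ((hGcl 0).isCompact) hGcl
      have hx1 : x ∈ ⋂ n, s n := by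
        rw [← hWiInter]
        exact Set.mem_iInter.2 fun N => (Set.mem_iInter.1 hx N).1
      have hx2 : p.2 + δ ≤ |f x| := (Set.mem_iInter.1 hx 0).2
      have := hb x (Set.mem_iInter.1 hx1)
      linarith
    · rintro ⟨⟨hε, ⟨f, hTf⟩⟩, hk⟩
      refine ⟨hε, f, hTf, fun x hx => ?_⟩
      refine le_of_forall_pos_le_add fun δ hδ => ?_
      obtain ⟨k, hkδ⟩ := exists_nat_one_div_lt hδ
      obtain ⟨N, -, f', hTf', hb'⟩ := hk k
      have hf' : f' = f := hinj (hTf'.trans hTf.symm)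
      subst hf'
      have := hb' x (hWsub N (Set.mem_iInter.2 hx))
      linarith
  rw [key]
  refine analyticSet_inter (analyticSet_inter ?_ ?_) (AnalyticSet.iInter fun k => ?_)
  · exact (isClosed_le continuous_const continuous_snd).analyticSet
  · exact ((rangeT_measurable hu hrange).preimage measurable_fst).analyticSet
  · refine AnalyticSet.iUnion fun N => ?_
    exact (hWA N).preimage (continuous_fst.prodMk (continuous_snd.add continuous_const))

end Aux

/-- For a sick compactum `K` and a sequence `(D n)` of σ-generated closed subsets of `K`, the
set of sequences `(t n)` admitting a continuous function constantly equal to `t n` on each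
`D n` is an analytic subset of `ℝ^ℕ`. -/
theorem stmt_8 (K : Type) [TopologicalSpace K] [CompactSpace K] [T2Space K]
    (hK : IsSick K) (D : ℕ → Set K) (hcl : ∀ n, IsClosed (D n))
    (hσ : ∀ n, SigmaGeneratedClosed K (D n)) :
    MeasureTheory.AnalyticSet
      {t : ℕ → ℝ | ∃ f : C(K, ℝ), ∀ n, ∀ x ∈ D n, f x = t n} := by
  obtain ⟨E, iE1, iE2, iE3, iE4, iE5, iE6, iE7, iE8, iE9, u, T, hu, hinj, hsup, hT1, hrange⟩ := hK
  letI := iE1; letI := iE2; letI := iE3; letI := iE4; letI := iE5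
  letI := iE6; letI := iE7; letI := iE8; letI := iE9
  borelize E
  have hVD : ∀ n, AnalyticSet (VV T (D n)) := by
    intro n
    refine (hσ n {C | IsClosed C ∧ AnalyticSet (VV T C)} (fun C hC => hC.1) ?_ ?_ ?_).2
    · exact fun C hCcl hCgδ => ⟨hCcl, VV_gdelta hu hinj hsup hT1 hrange hCcl hCgδ⟩
    · intro s hs
      exact ⟨isClosed_iInter fun m => (hs m).1,
        VV_iInter hu hinj hsup hT1 hrange s (fun m => (hs m).1) (fun m => (hs m).2)⟩
    · intro s hs
      exact ⟨isClosed_closure,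
        VV_closureUnion hinj s ▸ AnalyticSet.iInter fun m => (hs m).2⟩
  have hSP : {t : ℕ → ℝ | ∃ f : C(K, ℝ), ∀ n, ∀ x ∈ D n, f x = t n}
      = Prod.snd '' ((Prod.fst ⁻¹' Set.range T) ∩
        ⋂ n, (fun p : E × (ℕ → ℝ) => (p.1 - p.2 n • u, (0 : ℝ))) ⁻¹' VV T (D n)) := by
    ext t
    simp only [Set.mem_setOf_eq, Set.mem_image, Set.mem_inter_iff, Set.mem_preimage,
      Set.mem_iInter, Prod.exists]
    constructor
    · rintro ⟨f, hf⟩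
      refine ⟨T f, t, ⟨⟨f, rfl⟩, fun n => ?_⟩, rfl⟩
      refine ⟨le_refl 0, f - (t n) • 1, ?_, fun x hx => ?_⟩
      · rw [map_sub, _root_.map_smul, hT1]
      · simp only [ContinuousMap.sub_apply, ContinuousMap.smul_apply,
          ContinuousMap.one_apply, smul_eq_mul, mul_one, hf n x hx, sub_self, abs_zero,
          le_refl]
    · rintro ⟨y, t', ⟨⟨f, hTf⟩, hmem⟩, rfl⟩
      refine ⟨f, fun n x hx => ?_⟩
      obtain ⟨-, g, hTg, hgb⟩ := hmem n
      have hgf : g = f - (t' n) • 1 := by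
        apply hinj
        rw [hTg, map_sub, _root_.map_smul, hT1, hTf]
      have := hgb x hx
      rw [hgf] at this
      simp only [ContinuousMap.sub_apply, ContinuousMap.smul_apply,
        ContinuousMap.one_apply, smul_eq_mul, mul_one] at this
      have h0 : f x - t' n = 0 := by
        have := abs_nonpos_iff.1 this
        exact this
      linarith
  rw [hSP]
  refine AnalyticSet.image_of_continuous ?_ continuous_snd
  refine analyticSet_inter
    (((rangeT_measurable hu hrange).preimage measurable_fst).analyticSet)
    (AnalyticSet.iInter fun n => ?_)
  refine (hVD n).preimage ?_
  exact (continuous_fst.sub (((continuous_apply n).comp continuous_snd).smul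
    continuous_const)).prodMk continuous_const
end

section
/- Let K be a sick compactum and let D be a countable set of σ-generated points of K. Then the set of restrictions { f|_D : f ∈ C(K,ℝ) } is an analytic subset of ℝ^D with the product topology. -/
open MeasureTheory Topology Filter Set

open scoped Pointwise


set_option linter.unusedSectionVars false

namespace SickProof

variable {K : Type} [TopologicalSpace K] [CompactSpace K] [T2Space K]

/-- Functions vanishing on `L`. -/
def vI (L : Set K) : Set C(K, ℝ) := {f | ∀ z ∈ L, f z = 0}

lemma vI_anti {A B : Set K} (h : A ⊆ B) : vI B ⊆ vI A := fun _ hf z hz => hf z (h hz)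

lemma vI_closure_iUnion (s : ℕ → Set K) : vI (closure (⋃ n, s n)) = ⋂ n, vI (s n) := by
  ext f
  constructor
  · intro hf
    exact mem_iInter.2 fun n => vI_anti ((subset_iUnion s n).trans subset_closure) hf
  · intro hf z hz
    have h0 : (⋃ n, s n) ⊆ (f : K → ℝ) ⁻¹' {0} := by
      rintro z hz
      rcases mem_iUnion.1 hz with ⟨n, hn⟩
      exact (mem_iInter.1 hf n) z hn
    exact closure_minimal h0 (isClosed_singleton.preimage f.continuous) hz

/-- `f` with values clamped to `[-ε, ε]` removed. -/
noncomputable def trunc (ε : ℝ) (f : C(K, ℝ)) : C(K, ℝ) :=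
  f - ((f ⊔ ((-ε) • (1 : C(K, ℝ)))) ⊓ (ε • (1 : C(K, ℝ))))

lemma trunc_apply (ε : ℝ) (f : C(K, ℝ)) (x : K) :
    trunc ε f x = f x - ((f x ⊔ (-ε)) ⊓ ε) := by
  simp [trunc]

lemma trunc_dist {ε : ℝ} (hε : 0 ≤ ε) (f : C(K, ℝ)) (x : K) : |f x - trunc ε f x| ≤ ε := by
  rw [trunc_apply]
  have h1 : -ε ≤ (f x ⊔ (-ε)) ⊓ ε := le_inf (le_sup_right) (by linarith)
  have h2 : (f x ⊔ (-ε)) ⊓ ε ≤ ε := inf_le_right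
  rw [abs_le]
  constructor <;> simp only [sub_sub_cancel] <;> linarith

lemma trunc_eq_zero {ε : ℝ} {f : C(K, ℝ)} {x : K} (h : |f x| ≤ ε) : trunc ε f x = 0 := by
  rw [trunc_apply]
  rw [abs_le] at h
  have h1 : f x ⊔ (-ε) = f x := sup_eq_left.2 h.1
  rw [h1, inf_eq_left.2 h.2, sub_self]

lemma vI_binary {A B : Set K} (hA : IsClosed A) (hB : IsClosed B) {f : C(K, ℝ)}
    (hf : f ∈ vI (A ∩ B)) {ε : ℝ} (hε : 0 < ε) :
    ∃ p ∈ vI A, ∃ q ∈ vI B, ∀ x, |f x - (p x + q x)| ≤ ε := by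
  set t := trunc ε f with ht
  have hCcl : IsClosed {x | ε ≤ |f x|} := isClosed_le continuous_const (map_continuous f).abs
  have hdisj : Disjoint (A ∩ {x | ε ≤ |f x|}) (B ∩ {x | ε ≤ |f x|}) := by
    rw [Set.disjoint_left]
    rintro x ⟨hxA, hx⟩ ⟨hxB, -⟩
    have h0 := hf x ⟨hxA, hxB⟩
    simp only [Set.mem_setOf_eq, h0, abs_zero] at hx
    linarith
  obtain ⟨φ, hφ0, hφ1, hφ01⟩ :=
    exists_continuous_zero_one_of_isClosed (hA.inter hCcl) (hB.inter hCcl) hdisj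
  refine ⟨t * φ, ?_, t * (1 - φ), ?_, ?_⟩
  · intro z hz
    by_cases hc : ε ≤ |f z|
    · have h1 := hφ0 ⟨hz, hc⟩
      simp only [Pi.zero_apply] at h1
      simp only [ContinuousMap.mul_apply, h1, mul_zero]
    · simp only [ContinuousMap.mul_apply]
      rw [trunc_eq_zero (le_of_not_ge hc)]
      ring
  · intro z hz
    by_cases hc : ε ≤ |f z|
    · have h1 := hφ1 ⟨hz, hc⟩
      simp only [Pi.one_apply] at h1
      simp only [ContinuousMap.mul_apply, ContinuousMap.sub_apply, ContinuousMap.one_apply, h1]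
      ring
    · simp only [ContinuousMap.mul_apply]
      rw [trunc_eq_zero (le_of_not_ge hc)]
      ring
  · intro x
    have e : (t * φ) x + (t * (1 - φ)) x = t x := by
      simp only [ContinuousMap.mul_apply, ContinuousMap.sub_apply, ContinuousMap.one_apply]
      ring
    rw [e]
    exact trunc_dist hε.le f x

/-- Iterated sum sets. -/
def sumN (s : ℕ → Set K) : ℕ → Set C(K, ℝ)
  | 0 => {0}
  | (N + 1) => sumN s N + vI (s N)

lemma sumN_vanish (s : ℕ → Set K) :
    ∀ N, ∀ g ∈ sumN s N, ∀ z ∈ ⋂ n, s n, g z = 0 := by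
  intro N
  induction N with
  | zero =>
      rintro g hg z _
      simp only [sumN, Set.mem_singleton_iff] at hg
      simp [hg]
  | succ N ih =>
      rintro g hg z hz
      rcases Set.mem_add.1 hg with ⟨a, ha, b, hb, rfl⟩
      have hbz : b z = 0 := hb z (mem_iInter.1 hz N)
      have : (a + b) z = a z + b z := rfl
      rw [this, ih a ha z hz, hbz, add_zero]

lemma vI_finite_decomp (s : ℕ → Set K) (hcl : ∀ n, IsClosed (s n)) :
    ∀ N, ∀ f ∈ vI (⋂ n ∈ Finset.range N, s n), ∀ ε : ℝ, 0 < ε →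
      ∃ g ∈ sumN s N, ∀ x, |f x - g x| ≤ ε := by
  intro N
  induction N with
  | zero =>
      intro f hf ε hε
      refine ⟨0, rfl, fun x => ?_⟩
      have : f x = 0 := hf x (by simp)
      simp [this]
      linarith
  | succ N ih =>
      intro f hf ε hε
      have hFcl : IsClosed (⋂ n ∈ Finset.range N, s n) :=
        isClosed_biInter fun n _ => hcl n
      have hf' : f ∈ vI ((⋂ n ∈ Finset.range N, s n) ∩ s N) := by
        intro z hz
        apply hf
        rw [Finset.range_add_one]
        rw [Set.mem_iInter₂]
        intro i hi
        rcases Finset.mem_insert.1 hi with rfl | hi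
        · exact hz.2
        · exact Set.mem_iInter₂.1 hz.1 i hi
      obtain ⟨p, hp, q, hq, hpq⟩ := vI_binary hFcl (hcl N) hf' (half_pos hε)
      obtain ⟨g, hg, hpg⟩ := ih p hp (ε / 2) (half_pos hε)
      refine ⟨g + q, Set.add_mem_add hg hq, fun x => ?_⟩
      have e : f x - (g + q) x = (f x - (p x + q x)) + (p x - g x) := by
        have : (g + q) x = g x + q x := rfl
        rw [this]; ring
      calc |f x - (g + q) x| ≤ |f x - (p x + q x)| + |p x - g x| := by rw [e]; exact abs_add_le _ _
        _ ≤ ε / 2 + ε / 2 := add_le_add (hpq x) (hpg x)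
        _ = ε := by ring

lemma vI_iInter_approx (s : ℕ → Set K) (hcl : ∀ n, IsClosed (s n)) {f : C(K, ℝ)}
    (hf : f ∈ vI (⋂ n, s n)) {ε : ℝ} (hε : 0 < ε) :
    ∃ N, ∃ g ∈ sumN s N, ∀ x, |f x - g x| ≤ ε := by
  have hε2 : 0 < ε / 2 := half_pos hε
  set C := {x | ε / 2 ≤ |f x|} with hC
  have hCcl : IsClosed C := isClosed_le continuous_const (map_continuous f).abs
  have hCcomp : IsCompact C := hCcl.isCompact
  have hdisj : C ∩ ⋂ n, s n = ∅ := by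
    ext x
    simp only [Set.mem_inter_iff, Set.mem_empty_iff_false, iff_false, not_and]
    intro hx hxi
    have := hf x hxi
    rw [hC] at hx
    simp only [Set.mem_setOf_eq, this, abs_zero] at hx
    linarith
  obtain ⟨F, hF⟩ := hCcomp.elim_finite_subfamily_closed s hcl hdisj
  set N := F.sup id + 1 with hN
  have hsub : (⋂ n ∈ Finset.range N, s n) ⊆ ⋂ i ∈ F, s i := by
    intro x hx
    rw [Set.mem_iInter₂] at hx ⊢
    intro i hi
    have : i < N := Nat.lt_succ_of_le (Finset.le_sup (f := id) hi)
    exact hx i (Finset.mem_range.2 this)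
  have hFsub : C ∩ ⋂ n ∈ Finset.range N, s n = ∅ := by
    apply Set.eq_empty_of_subset_empty
    rw [← hF]
    exact Set.inter_subset_inter_right _ hsub
  set t := trunc (ε / 2) f with htdef
  have htv : t ∈ vI (⋂ n ∈ Finset.range N, s n) := by
    intro z hz
    apply trunc_eq_zero
    by_contra hc
    push_neg at hc
    have hzC : z ∈ C := le_of_lt hc
    have : z ∈ C ∩ ⋂ n ∈ Finset.range N, s n := ⟨hzC, hz⟩
    rw [hFsub] at this
    exact this
  obtain ⟨g, hg, hgt⟩ := vI_finite_decomp s hcl N t htv (ε / 2) hε2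
  refine ⟨N, g, hg, fun x => ?_⟩
  calc |f x - g x| ≤ |f x - t x| + |t x - g x| := by
        have : f x - g x = (f x - t x) + (t x - g x) := by ring
        rw [this]; exact abs_add_le _ _
    _ ≤ ε / 2 + ε / 2 := add_le_add (trunc_dist hε2.le f x) (hgt x)
    _ = ε := by ring
lemma gdelta_char {L : Set K} (hLc : IsClosed L) (hLg : IsGδ L) :
    ∃ G : ℕ → C(K, ℝ), (∀ n x, 0 ≤ G n x) ∧
      ∀ f : C(K, ℝ),
        f ∈ vI L ↔ ∀ k : ℕ, ∃ n m : ℕ, ∀ x, |f x| ≤ (m : ℝ) * G n x + 1 / (k + 1) := by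
  obtain ⟨U, hUo, hLU⟩ := hLg.eq_iInter_nat
  have hLsub : ∀ n, L ⊆ U n := fun n => hLU ▸ iInter_subset U n
  have hdisj : ∀ n, Disjoint L (U n)ᶜ := fun n =>
    Set.disjoint_compl_right_iff_subset.2 (hLsub n)
  choose h hh0 hh1 hh01 using fun n =>
    exists_continuous_zero_one_of_isClosed hLc (hUo n).isClosed_compl (hdisj n)
  set G : ℕ → C(K, ℝ) := fun n => Nat.rec (h 0) (fun n Gn => Gn ⊔ h (n + 1)) n with hGdef
  have hGsucc : ∀ n, G (n + 1) = G n ⊔ h (n + 1) := fun n => rfl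
  have hG0 : ∀ n x, 0 ≤ G n x := by
    intro n
    induction n with
    | zero => intro x; exact (hh01 0 x).1
    | succ n ih =>
        intro x
        rw [hGsucc]
        exact le_trans (ih x) le_sup_left
  have hGL : ∀ n, ∀ z ∈ L, G n z = 0 := by
    intro n
    induction n with
    | zero => intro z hz; exact hh0 0 hz
    | succ n ih =>
        intro z hz
        rw [hGsucc]
        have : (G n ⊔ h (n + 1)) z = G n z ⊔ h (n + 1) z := rfl
        rw [this, ih z hz, hh0 (n + 1) hz]
        simp
  have hGh : ∀ n x, h n x ≤ G n x := by
    intro n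
    cases n with
    | zero => intro x; exact le_rfl
    | succ n => intro x; exact le_sup_right
  have hGmono : ∀ i j, i ≤ j → ∀ x, G i x ≤ G j x := by
    intro i j hij x
    have : Monotone fun n => G n x :=
      monotone_nat_of_le_succ fun n => by rw [hGsucc]; exact le_sup_left
    exact this hij
  refine ⟨G, hG0, fun f => ⟨?_, ?_⟩⟩
  · intro hf k
    have hε : (0 : ℝ) < 1 / (k + 1) := by positivity
    set C := {x | 1 / ((k : ℝ) + 1) ≤ |f x|} with hC
    have hCcl : IsClosed C := isClosed_le continuous_const (map_continuous f).abs
    have hCcomp : IsCompact C := hCcl.isCompact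
    have hcover : C ⊆ ⋃ n, {x | (1 / 2 : ℝ) < G n x} := by
      intro x hx
      have hxL : x ∉ L := by
        intro hxL
        have := hf x hxL
        rw [hC] at hx
        simp only [Set.mem_setOf_eq, this, abs_zero] at hx
        linarith
      rw [hLU] at hxL
      rcases (by simpa using hxL : ∃ n, x ∉ U n) with ⟨n, hn⟩
      have : h n x = 1 := by
        have := hh1 n (by simpa using hn)
        simpa using this
      refine Set.mem_iUnion.2 ⟨n, ?_⟩
      simp only [Set.mem_setOf_eq]
      calc (1 / 2 : ℝ) < 1 := by norm_num
        _ = h n x := by rw [‹h n x = 1›]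
        _ ≤ G n x := hGh n x
    obtain ⟨F, hF⟩ := hCcomp.elim_finite_subcover
      (fun n => {x | (1 / 2 : ℝ) < G n x})
      (fun n => isOpen_lt continuous_const (map_continuous (G n))) hcover
    set n := F.sup id with hn
    have hCVn : C ⊆ {x | (1 / 2 : ℝ) < G n x} := by
      intro x hx
      rcases Set.mem_iUnion₂.1 (hF hx) with ⟨i, hiF, hxi⟩
      have : G i x ≤ G n x := hGmono i n (Finset.le_sup (f := id) hiF) x
      exact lt_of_lt_of_le hxi this
    obtain ⟨m, hm⟩ := exists_nat_ge (2 * ‖f‖)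
    refine ⟨n, m, fun x => ?_⟩
    by_cases hc : 1 / ((k : ℝ) + 1) ≤ |f x|
    · have hx : x ∈ C := hc
      have h2 : (1 / 2 : ℝ) < G n x := hCVn hx
      have hfx : |f x| ≤ ‖f‖ := by
        rw [← Real.norm_eq_abs]
        exact f.norm_coe_le_norm x
      have : (m : ℝ) * (1 / 2) ≤ (m : ℝ) * G n x :=
        mul_le_mul_of_nonneg_left h2.le (Nat.cast_nonneg m)
      nlinarith
    · push_neg at hc
      have : 0 ≤ (m : ℝ) * G n x := mul_nonneg (Nat.cast_nonneg m) (hG0 n x)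
      linarith
  · intro hf z hz
    by_contra hne
    obtain ⟨k, hk⟩ := exists_nat_one_div_lt (abs_pos.2 hne)
    obtain ⟨n, m, hnm⟩ := hf k
    have := hnm z
    rw [hGL n z hz, mul_zero, zero_add] at this
    have hkk : (1 : ℝ) / (k + 1) = 1 / ((k : ℝ) + 1) := by norm_num
    linarith

lemma analyticSet_prod {α β : Type*} [TopologicalSpace α] [TopologicalSpace β]
    {A : Set α} {B : Set β} (hA : AnalyticSet A) (hB : AnalyticSet B) :
    AnalyticSet (A ×ˢ B) := by
  rcases analyticSet_iff_exists_polishSpace_range.1 hA with ⟨γ, tγ, pγ, f, fc, rfl⟩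
  rcases analyticSet_iff_exists_polishSpace_range.1 hB with ⟨δ, tδ, pδ, g, gc, rfl⟩
  rw [← Set.range_prodMap]
  exact analyticSet_range_of_polishSpace (fc.prodMap gc)

lemma analyticSet_inter {α : Type*} [TopologicalSpace α] [T2Space α] {A B : Set α}
    (hA : AnalyticSet A) (hB : AnalyticSet B) : AnalyticSet (A ∩ B) := by
  have h : A ∩ B = ⋂ b : Bool, (bif b then A else B) := by
    ext x
    simp [Bool.forall_bool, and_comm]
  rw [h]
  exact AnalyticSet.iInter fun b => by cases b <;> simpa

lemma analyticSet_add {α : Type*} [TopologicalSpace α] [AddMonoid α] [ContinuousAdd α]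
    {A B : Set α} (hA : AnalyticSet A) (hB : AnalyticSet B) : AnalyticSet (A + B) := by
  rw [← Set.add_image_prod]
  exact (analyticSet_prod hA hB).image_of_continuous continuous_add

section Tside

variable {E : Type} [NormedAddCommGroup E] [Lattice E] [IsOrderedAddMonoid E] [HasSolidNorm E]
  [NormedSpace ℝ E] [PosSMulStrictMono ℝ E] [PosSMulReflectLT ℝ E]
variable {T : C(K, ℝ) →ₗ[ℝ] E} {u : E}

lemma Tmono (hsup : ∀ f g : C(K, ℝ), T (f ⊔ g) = T f ⊔ T g) {f g : C(K, ℝ)} (h : f ≤ g) :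
    T f ≤ T g := by
  have h2 : T g = T f ⊔ T g := by
    conv_lhs => rw [← sup_eq_right.2 h]
    exact hsup f g
  rw [h2]
  exact le_sup_left

lemma Treflect (hsup : ∀ f g : C(K, ℝ), T (f ⊔ g) = T f ⊔ T g)
    (hinj : Function.Injective T) {f g : C(K, ℝ)} (h : T f ≤ T g) : f ≤ g := by
  have he : T (f ⊔ g) = T g := by rw [hsup]; exact sup_eq_right.2 h
  exact sup_eq_right.1 (hinj he)

lemma Tabs (hsup : ∀ f g : C(K, ℝ), T (f ⊔ g) = T f ⊔ T g) (f : C(K, ℝ)) :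
    T |f| = |T f| := by
  have e1 : |f| = f ⊔ (-f) := rfl
  have e2 : |T f| = T f ⊔ (-(T f)) := rfl
  rw [e1, e2, hsup, map_neg]

lemma smul_mono_right (hu : 0 ≤ u) {a b : ℝ} (h : a ≤ b) : a • u ≤ b • u := by
  have h0 : (0 : E) ≤ b • u - a • u := by
    rw [← sub_smul]
    exact smul_nonneg (sub_nonneg.2 h) hu
  exact sub_nonneg.1 h0

lemma isClosed_absle (w : E) : IsClosed {y : E | |y| ≤ w} :=
  isClosed_le (continuous_id.sup continuous_neg) continuous_const

lemma rangeT_eq (hu : 0 ≤ u)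
    (hrange : Set.range T = {y : E | ∃ r : ℝ, 0 < r ∧ |y| ≤ r • u}) :
    Set.range T = ⋃ n : ℕ, {y : E | |y| ≤ ((n : ℝ) + 1) • u} := by
  rw [hrange]
  ext y
  simp only [Set.mem_setOf_eq, Set.mem_iUnion]
  constructor
  · rintro ⟨r, hr, hy⟩
    obtain ⟨n, hn⟩ := exists_nat_ge r
    exact ⟨n, hy.trans (smul_mono_right hu (by linarith))⟩
  · rintro ⟨n, hy⟩
    exact ⟨(n : ℝ) + 1, by positivity, hy⟩

lemma rangeT_analytic [PolishSpace E] (hu : 0 ≤ u)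
    (hrange : Set.range T = {y : E | ∃ r : ℝ, 0 < r ∧ |y| ≤ r • u}) :
    AnalyticSet (Set.range T) := by
  rw [rangeT_eq hu hrange]
  exact AnalyticSet.iUnion fun n => (isClosed_absle _).analyticSet

lemma image_vI_gdelta [PolishSpace E]
    (hsup : ∀ f g : C(K, ℝ), T (f ⊔ g) = T f ⊔ T g) (hinj : Function.Injective T)
    (hu : 0 ≤ u) (hT1 : T 1 = u)
    (hrange : Set.range T = {y : E | ∃ r : ℝ, 0 < r ∧ |y| ≤ r • u})
    {L : Set K} (hLc : IsClosed L) (hLg : IsGδ L) : AnalyticSet (T '' vI L) := by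
  obtain ⟨G, hG0, hiff⟩ := gdelta_char hLc hLg
  have key : T '' vI L = Set.range T ∩
      ⋂ k : ℕ, ⋃ p : ℕ × ℕ,
        {y : E | |y| ≤ (p.2 : ℝ) • T (G p.1) + (1 / ((k : ℝ) + 1)) • u} := by
    ext y
    constructor
    · rintro ⟨f, hf, rfl⟩
      refine ⟨Set.mem_range_self f, Set.mem_iInter.2 fun k => ?_⟩
      obtain ⟨n, m, hnm⟩ := (hiff f).1 hf k
      refine Set.mem_iUnion.2 ⟨(n, m), ?_⟩
      have horder : |f| ≤ (m : ℝ) • G n + (1 / ((k : ℝ) + 1)) • 1 := by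
        rw [ContinuousMap.le_def]
        intro x
        have hx := hnm x
        have e : ((m : ℝ) • G n + (1 / ((k : ℝ) + 1)) • 1) x
            = (m : ℝ) * G n x + 1 / ((k : ℝ) + 1) := by
          simp [ContinuousMap.add_apply, ContinuousMap.smul_apply]
        rw [e]
        exact hx
      have hfinal := Tmono hsup horder
      rw [Tabs hsup, map_add, _root_.map_smul, _root_.map_smul, hT1] at hfinal
      exact hfinal
    · rintro ⟨⟨f, rfl⟩, hy⟩
      refine ⟨f, ?_, rfl⟩
      rw [hiff f]
      intro k
      obtain ⟨⟨n, m⟩, hnm⟩ := Set.mem_iUnion.1 (Set.mem_iInter.1 hy k)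
      refine ⟨n, m, fun x => ?_⟩
      have h1 : |T f| ≤ T ((m : ℝ) • G n + (1 / ((k : ℝ) + 1)) • 1) := by
        rw [map_add, _root_.map_smul, _root_.map_smul, hT1]
        exact hnm
      rw [← Tabs hsup] at h1
      have h2 := Treflect hsup hinj h1
      have h3 := ContinuousMap.le_def.1 h2 x
      have e : ((m : ℝ) • G n + (1 / ((k : ℝ) + 1)) • 1) x
          = (m : ℝ) * G n x + 1 / ((k : ℝ) + 1) := by
        simp [ContinuousMap.add_apply, ContinuousMap.smul_apply]
      rw [e] at h3
      exact h3
  rw [key]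
  refine analyticSet_inter (rangeT_analytic hu hrange) ?_
  exact AnalyticSet.iInter fun k => AnalyticSet.iUnion fun p => (isClosed_absle _).analyticSet

lemma image_vI_closureUnion (hinj : Function.Injective T) (s : ℕ → Set K) :
    T '' vI (closure (⋃ n, s n)) = ⋂ n, T '' vI (s n) := by
  rw [vI_closure_iUnion]
  ext y
  constructor
  · rintro ⟨f, hf, rfl⟩
    exact Set.mem_iInter.2 fun n => Set.mem_image_of_mem T (Set.mem_iInter.1 hf n)
  · intro hy
    obtain ⟨f, hf0, rfl⟩ := Set.mem_iInter.1 hy 0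
    refine ⟨f, Set.mem_iInter.2 fun n => ?_, rfl⟩
    obtain ⟨g, hg, hgf⟩ := Set.mem_iInter.1 hy n
    rwa [← hinj hgf]

lemma image_vI_iInter [PolishSpace E]
    (hsup : ∀ f g : C(K, ℝ), T (f ⊔ g) = T f ⊔ T g) (hinj : Function.Injective T)
    (hu : 0 ≤ u) (hT1 : T 1 = u)
    (hrange : Set.range T = {y : E | ∃ r : ℝ, 0 < r ∧ |y| ≤ r • u})
    (s : ℕ → Set K) (hcl : ∀ n, IsClosed (s n))
    (hana : ∀ n, AnalyticSet (T '' vI (s n))) :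
    AnalyticSet (T '' vI (⋂ n, s n)) := by
  have hsums : ∀ N, AnalyticSet (T '' sumN s N) := by
    intro N
    induction N with
    | zero =>
        have e : T '' sumN s 0 = {0} := by
          simp only [sumN, Set.image_singleton, map_zero]
        rw [e]
        exact isClosed_singleton.analyticSet
    | succ N ih =>
        have e : T '' sumN s (N + 1) = T '' sumN s N + T '' vI (s N) := by
          simp only [sumN]
          exact Set.image_add T
        rw [e]
        exact analyticSet_add ih (hana N)
  have key : T '' vI (⋂ n, s n) = Set.range T ∩
      ⋂ k : ℕ, ((⋃ N, T '' sumN s N) + {w : E | |w| ≤ (1 / ((k : ℝ) + 1)) • u}) := by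
    ext y
    constructor
    · rintro ⟨f, hf, rfl⟩
      refine ⟨Set.mem_range_self f, Set.mem_iInter.2 fun k => ?_⟩
      have hε : (0 : ℝ) < 1 / ((k : ℝ) + 1) := by positivity
      obtain ⟨N, g, hg, hfg⟩ := vI_iInter_approx s hcl hf hε
      refine Set.mem_add.2 ⟨T g, Set.mem_iUnion.2 ⟨N, Set.mem_image_of_mem T hg⟩,
        T f - T g, ?_, by rw [add_sub_cancel]⟩
      have horder : |f - g| ≤ (1 / ((k : ℝ) + 1)) • 1 := by
        rw [ContinuousMap.le_def]
        intro x
        have e : ((1 / ((k : ℝ) + 1)) • (1 : C(K, ℝ))) x = 1 / ((k : ℝ) + 1) := by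
          simp [ContinuousMap.smul_apply]
        rw [e]
        exact hfg x
      have hfinal := Tmono hsup horder
      rw [Tabs hsup, map_sub, _root_.map_smul, hT1] at hfinal
      exact hfinal
    · rintro ⟨⟨f, rfl⟩, hy⟩
      refine ⟨f, ?_, rfl⟩
      intro z hz
      have hk : ∀ k : ℕ, |f z| ≤ 1 / ((k : ℝ) + 1) := by
        intro k
        obtain ⟨a, ha, w, hw, hsum⟩ := Set.mem_add.1 (Set.mem_iInter.1 hy k)
        obtain ⟨N, hN⟩ := Set.mem_iUnion.1 ha
        obtain ⟨g, hg, rfl⟩ := hN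
        have hw2 : T (f - g) = w := by
          rw [map_sub, ← hsum]
          rw [add_sub_cancel_left]
        have h1 : |T (f - g)| ≤ T ((1 / ((k : ℝ) + 1)) • 1) := by
          rw [hw2, _root_.map_smul, hT1]
          exact hw
        rw [← Tabs hsup] at h1
        have h2 := Treflect hsup hinj h1
        have h3 := ContinuousMap.le_def.1 h2 z
        have e : ((1 / ((k : ℝ) + 1)) • (1 : C(K, ℝ))) z = 1 / ((k : ℝ) + 1) := by
          simp [ContinuousMap.smul_apply]
        rw [e] at h3
        have hgz : g z = 0 := sumN_vanish s N g hg z hz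
        have e2 : |f - g| z = |f z - g z| := rfl
        rw [e2, hgz, sub_zero] at h3
        exact h3
      by_contra hne
      obtain ⟨k, hklt⟩ := exists_nat_one_div_lt (abs_pos.2 hne)
      have := hk k
      have hkk : (1 : ℝ) / ((k : ℝ) + 1) = 1 / ((k : ℕ) + 1 : ℝ) := by norm_num
      linarith
  rw [key]
  refine analyticSet_inter (rangeT_analytic hu hrange) ?_
  exact AnalyticSet.iInter fun k =>
    analyticSet_add (AnalyticSet.iUnion hsums) (isClosed_absle _).analyticSet

end Tside

end SickProof

/-- If `D` is a countable set of σ-generated points of a sick compactum `K`, then the set of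
restrictions to `D` of continuous real functions on `K` is an analytic subset of `ℝ^D`. -/
theorem stmt_9 (K : Type) [TopologicalSpace K] [CompactSpace K] [T2Space K]
    (hK : IsSick K) (D : Set K) (hD : D.Countable)
    (hσ : ∀ x ∈ D, SigmaGeneratedClosed K {x}) :
    MeasureTheory.AnalyticSet {g : D → ℝ | ∃ f : C(K, ℝ), ∀ x : D, g x = f x} := by
  classical
  obtain ⟨E, hNL, hLat, hOAM, hSN, hNS, hOS, hRL, hCS, hSep, u, T, hu, hinj, hsup, hT1, hrange⟩ := hK
  letI := hNL
  letI := hLat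
  haveI := hOAM
  haveI := hSN
  haveI := hRL
  letI := hNS
  letI := hOS
  letI := hCS
  letI := hSep
  haveI : PolishSpace E := inferInstance
  haveI : Countable ↥D := hD.to_subtype
  haveI : PolishSpace (↥D → ℝ) := inferInstance
  have hB : ∀ x : ↥D, AnalyticSet (T '' SickProof.vI {(x : K)}) := by
    intro x
    have hx := hσ x x.2
    have := hx {L | IsClosed L ∧ AnalyticSet (T '' SickProof.vI L)}
      (fun C hC => hC.1)
      (fun C hc hg =>
        ⟨hc, SickProof.image_vI_gdelta hsup hinj hu hT1 hrange hc hg⟩)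
      (fun s hs =>
        ⟨isClosed_iInter fun n => (hs n).1,
          SickProof.image_vI_iInter hsup hinj hu hT1 hrange s
            (fun n => (hs n).1) (fun n => (hs n).2)⟩)
      (fun s hs =>
        ⟨isClosed_closure, by
          rw [SickProof.image_vI_closureUnion hinj s]
          exact AnalyticSet.iInter fun n => (hs n).2⟩)
    exact this.2
  by_cases hne : Nonempty ↥D
  · set P : Set (E × (↥D → ℝ)) :=
      (Set.range T ×ˢ (Set.univ : Set (↥D → ℝ))) ∩
        ⋂ x : ↥D, {p : E × (↥D → ℝ) | p.1 - p.2 x • u ∈ T '' SickProof.vI {(x : K)}}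
      with hPdef
    have hPana : AnalyticSet P := by
      refine SickProof.analyticSet_inter ?_ ?_
      · have e : (Set.range T ×ˢ (Set.univ : Set (↥D → ℝ)))
            = Prod.fst ⁻¹' Set.range T := by
          ext p; simp
        rw [e]
        exact (SickProof.rangeT_analytic hu hrange).preimage continuous_fst
      · refine AnalyticSet.iInter fun x => ?_
        have hc : Continuous fun p : E × (↥D → ℝ) => p.1 - p.2 x • u :=
          continuous_fst.sub (((continuous_apply x).comp continuous_snd).smul
            continuous_const)
        exact (hB x).preimage hc
    have hset : {g : ↥D → ℝ | ∃ f : C(K, ℝ), ∀ x : ↥D, g x = f x} = Prod.snd '' P := by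
      ext g
      constructor
      · rintro ⟨f, hf⟩
        refine ⟨(T f, g), ⟨⟨Set.mem_range_self f, Set.mem_univ _⟩,
          Set.mem_iInter.2 fun x => ?_⟩, rfl⟩
        have e : T f - g x • u = T (f - f (x : K) • 1) := by
          rw [map_sub, _root_.map_smul, hT1, hf x]
        show T f - g x • u ∈ T '' SickProof.vI {(x : K)}
        rw [e]
        refine Set.mem_image_of_mem T ?_
        intro z hz
        rcases hz with rfl
        simp
      · rintro ⟨⟨y, g'⟩, ⟨⟨⟨f, rfl⟩, -⟩, hmem⟩, rfl⟩
        refine ⟨f, fun x => ?_⟩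
        have hx := Set.mem_iInter.1 hmem x
        obtain ⟨w, hw, hwe⟩ := hx
        have he : T (f - g' x • 1) = T w := by
          rw [map_sub, _root_.map_smul, hT1, hwe]
        have hfw := hinj he.symm
        have hwx : w (x : K) = 0 := hw (x : K) rfl
        have e2 : (f - g' x • (1 : C(K, ℝ))) (x : K) = f (x : K) - g' x := by simp
        rw [hfw, e2] at hwx
        show g' x = f (x : K)
        linarith
    rw [hset]
    exact hPana.image_of_continuous continuous_snd
  · have hempty : {g : ↥D → ℝ | ∃ f : C(K, ℝ), ∀ x : ↥D, g x = f x} = Set.univ := by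
      ext g
      simp only [Set.mem_setOf_eq, Set.mem_univ, iff_true]
      exact ⟨0, fun x => (hne ⟨x⟩).elim⟩
    rw [hempty]
    exact isClosed_univ.analyticSet
end
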